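/- arXiv:math/0608774 — 8 statements merged into one kernel-verified Lean document; each statement's English description precedes it below -/
import Mathlib

section
/- Let C be a pointed category with finite limits and cokernels, and E a class of morphisms containing all isomorphisms. Assume: (a) E is pullback stable; (c) the E-short five lemma holds (in any commutative diagram with two short sequences K→A→B and K→A'→B, where k = ker(f), k' = ker(f'), f, f' ∈ E, and the outer vertical maps are identities, the middle vertical map w is an isomorphism); every morphism in E is a regular epimorphism; and for every f ∈ E, coker(ker(f)) ∈ E. Then every morphism in E is a normal epimorphism. -/
/-!
Let `f ∈ E` with kernel `k`, and factor `f = q ≫ w` through `q = coker k`. Pulling `f` back along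
`w` gives a projection `P ⟶ coker k` in `E` whose kernel is again `k`, and `s = (𝟙, q) : X ⟶ P` is a
morphism between the two `E`-extensions of `coker k` by `K`; the `E`-short five lemma makes it an
isomorphism. Hence `q` coequalizes every pair that `f` coequalizes, so `q` factors through the
regular epimorphism `f`, `w` is invertible, and `f` is the cokernel of its kernel.
-/

open CategoryTheory CategoryTheory.Limits ZeroObject

universe v u v' u'

namespace RelHom

variable {C : Type u} [Category.{v} C]

/-- `E` is stable under pullback. -/
def PullbackStable (E : MorphismProperty C) : Prop :=
  ∀ ⦃P X Y Z : C⦄ (fst : P ⟶ X) (snd : P ⟶ Y) (f : X ⟶ Z) (g : Y ⟶ Z),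
    IsPullback fst snd f g → E g → E fst

/-- `E` contains all isomorphisms. -/
def ContainsIsos (E : MorphismProperty C) : Prop :=
  ∀ ⦃X Y : C⦄ (f : X ⟶ Y), IsIso f → E f

/-- `E` is closed under composition. -/
def CompClosed (E : MorphismProperty C) : Prop :=
  ∀ ⦃X Y Z : C⦄ (f : X ⟶ Y) (g : Y ⟶ Z), E f → E g → E (f ≫ g)

/-- If `f ∈ E` and `f ≫ g ∈ E` then `g ∈ E`. -/
def RightCancel (E : MorphismProperty C) : Prop :=
  ∀ ⦃X Y Z : C⦄ (f : X ⟶ Y) (g : Y ⟶ Z), E f → E (f ≫ g) → E g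

variable [HasZeroMorphisms C]

/-- The `E`-short five lemma. -/
def ShortFive (E : MorphismProperty C) : Prop :=
  ∀ ⦃K A A' B : C⦄ (k : K ⟶ A) (k' : K ⟶ A') (f : A ⟶ B) (f' : A' ⟶ B) (w : A ⟶ A')
    (hk : k ≫ f = 0) (hk' : k' ≫ f' = 0),
    IsLimit (KernelFork.ofι k hk) → IsLimit (KernelFork.ofι k' hk') →
    E f → E f' → w ≫ f' = f → k ≫ w = k' → IsIso w

/-- Every morphism in `E` is a normal epimorphism. -/
def AllNormalEpi (E : MorphismProperty C) : Prop :=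
  ∀ ⦃X Y : C⦄ (f : X ⟶ Y), E f → Nonempty (NormalEpi f)

/-- Condition (f): (mono)∘(E) composites admit (E, mono)-factorizations. -/
def MonoFactor (E : MorphismProperty C) : Prop :=
  ∀ ⦃X Y Z : C⦄ (e : X ⟶ Y) (m : Y ⟶ Z), E e → Mono m →
    ∃ (W : C) (e' : X ⟶ W) (m' : W ⟶ Z), E e' ∧ Mono m' ∧ e' ≫ m' = e ≫ m

/-- Condition (g): the kernel-ladder condition. -/
def KernelLadder (E : MorphismProperty C) : Prop :=
  ∀ ⦃K K' A A' B : C⦄ (k : K ⟶ A) (k' : K' ⟶ A') (f : A ⟶ B) (f' : A' ⟶ B)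
    (u : K ⟶ K') (w : A ⟶ A') (hk : k ≫ f = 0) (hk' : k' ≫ f' = 0),
    IsLimit (KernelFork.ofι k hk) → IsLimit (KernelFork.ofι k' hk') →
    E f → E f' → E u → w ≫ f' = f → k ≫ w = u ≫ k' → E w

/-- `(C, E)` is a relative weakly homological category: conditions (a)–(e). -/
structure WeaklyHomological (E : MorphismProperty C) : Prop where
  contains_isos : ContainsIsos E
  stable : PullbackStable E
  normal_epi : AllNormalEpi E
  short_five : ShortFive E
  comp_closed : CompClosed E
  right_cancel : RightCancel E

/-- `(C, E)` is a relative homological category: conditions (a)–(g). -/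
structure Homological (E : MorphismProperty C) extends WeaklyHomological E : Prop where
  mono_factor : MonoFactor E
  ladder : KernelLadder E

/-- A composable pair is `E`-exact at the middle object if the incoming morphism
factors as a morphism in `E` followed by the kernel of the outgoing morphism. -/
def EExactAt (E : MorphismProperty C) ⦃X Y Z : C⦄ (f : X ⟶ Y) (g : Y ⟶ Z) : Prop :=
  ∃ (W : C) (e : X ⟶ W) (m : W ⟶ Y) (hm : m ≫ g = 0),
    E e ∧ Nonempty (IsLimit (KernelFork.ofι m hm)) ∧ e ≫ m = f

/-- `0 ⟶ X ⟶ Y ⟶ Z ⟶ 0` is an `E`-exact (short exact) sequence: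
`f` is the kernel of `g` and `g ∈ E`. -/
def ShortEExact (E : MorphismProperty C) ⦃X Y Z : C⦄ (f : X ⟶ Y) (g : Y ⟶ Z)
    (h : f ≫ g = 0) : Prop :=
  Nonempty (IsLimit (KernelFork.ofι f h)) ∧ E g

/-- The class of split epimorphisms. -/
def SplitEpis : MorphismProperty C := fun _ _ f => IsSplitEpi f

/-- The class of regular epimorphisms. -/
def RegEpis : MorphismProperty C := fun _ _ f => Nonempty (RegularEpi f)

noncomputable def isLimitKernelForkLiftOfIsPullback {K P X Q Y : C} {fst : P ⟶ X} {snd : P ⟶ Q}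
    {f : X ⟶ Y} {w : Q ⟶ Y} (sq : IsPullback fst snd f w) {k : K ⟶ X} {hk : k ≫ f = 0}
    (hlim : IsLimit (KernelFork.ofι k hk)) :
    IsLimit (KernelFork.ofι (sq.lift k 0 (by simp [hk])) (sq.lift_snd _ _ _)) := by
  let lift {W : C} (x : W ⟶ P) (hx : x ≫ snd = 0) :=
    KernelFork.IsLimit.lift' hlim (x ≫ fst) (by simp [sq.w, reassoc_of% hx])
  refine KernelFork.IsLimit.ofι _ _ (fun x hx => (lift x hx).1) (fun x hx => ?_)
    (fun x hx m hm => ?_)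
  · exact sq.hom_ext (by simpa using (lift x hx).2) (by simp [hx])
  · refine Fork.IsLimit.hom_ext hlim ((lift x hx).2.trans ?_).symm
    simp [← hm]

theorem ShortFive.comp_eq_comp_of_comp_eq_comp {E : MorphismProperty C} (h5 : ShortFive E)
    (hstb : PullbackStable E) {K X Q Y : C} {k : K ⟶ X} {f : X ⟶ Y} {q : X ⟶ Q} {w : Q ⟶ Y}
    [HasPullback f w] {hk : k ≫ f = 0} (hlim : IsLimit (KernelFork.ofι k hk)) (hkq : k ≫ q = 0)
    (hqw : q ≫ w = f) (hf : E f) (hq : E q) {Z : C} (a b : Z ⟶ X) (hab : a ≫ f = b ≫ f) :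
    a ≫ q = b ≫ q := by
  have sq := IsPullback.of_hasPullback f w
  have hsnd : E (pullback.snd f w) := hstb _ _ _ _ sq.flip hf
  let s : X ⟶ pullback f w := sq.lift (𝟙 X) q (by simp [hqw])
  have hlimq : IsLimit (KernelFork.ofι k hkq) := isKernelOfComp w f hlim hkq hqw
  have hks : k ≫ s = sq.lift k 0 (by simp [hk]) := sq.hom_ext (by simp [s]) (by simp [s, hkq])
  have : IsIso s :=
    h5 _ _ _ _ s hkq _ hlimq (isLimitKernelForkLiftOfIsPullback sq hlim) hq hsnd (by simp [s]) hks
  have hfst : pullback.fst f w ≫ q = pullback.snd f w := by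
    rw [← cancel_epi s]; simp [s]
  calc a ≫ q = sq.lift a (b ≫ q) (by simp [hqw, hab]) ≫ pullback.fst f w ≫ q := by simp
    _ = b ≫ q := by rw [hfst]; simp

theorem nonempty_normalEpi_of_coequalizes {X Y : C} {f : X ⟶ Y} [HasKernel f]
    [HasCokernel (kernel.ι f)] (hf : RegularEpi f)
    (h : ∀ {Z : C} (a b : Z ⟶ X), a ≫ f = b ≫ f →
      a ≫ cokernel.π (kernel.ι f) = b ≫ cokernel.π (kernel.ι f)) :
    Nonempty (NormalEpi f) := by
  have : Epi f := hf.epi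
  let w := cokernel.desc (kernel.ι f) f (kernel.condition f)
  obtain ⟨v, hfv⟩ := hf.desc' (cokernel.π (kernel.ι f)) (h _ _ hf.w)
  have : IsIso w := ⟨v, by ext; simp [w, hfv], by rw [← cancel_epi f]; simp [w, reassoc_of% hfv]⟩
  let hq : NormalEpi (cokernel.π (kernel.ι f)) :=
    ⟨_, kernel.ι f, cokernel.condition _, cokernelIsCokernel _⟩
  exact ⟨hq.ofArrowIso (Arrow.isoMk (Iso.refl X) (asIso w))⟩

theorem statement1_general [HasFiniteLimits C] [HasCokernels C]
    (E : MorphismProperty C) (hstb : PullbackStable E)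
    (h5 : ShortFive E)
    (hreg : ∀ ⦃X Y : C⦄ (f : X ⟶ Y), E f → Nonempty (RegularEpi f))
    (hcok : ∀ ⦃X Y : C⦄ (f : X ⟶ Y), E f → E (cokernel.π (kernel.ι f))) :
    AllNormalEpi E := by
  intro X Y f hf
  obtain ⟨hfreg⟩ := hreg f hf
  exact nonempty_normalEpi_of_coequalizes hfreg (h5.comp_eq_comp_of_comp_eq_comp hstb
    (hk := kernel.condition f) (kernelIsKernel f) (cokernel.condition _)
    (cokernel.π_desc _ _ (kernel.condition f)) hf (hcok f hf))

theorem statement1 [HasZeroObject C] [HasFiniteLimits C] [HasCokernels C]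
    (E : MorphismProperty C) (hiso : ContainsIsos E) (hstb : PullbackStable E)
    (h5 : ShortFive E)
    (hreg : ∀ ⦃X Y : C⦄ (f : X ⟶ Y), E f → Nonempty (RegularEpi f))
    (hcok : ∀ ⦃X Y : C⦄ (f : X ⟶ Y), E f → E (cokernel.π (kernel.ι f))) :
    AllNormalEpi E :=
  statement1_general E hstb h5 hreg hcok

end RelHom
end

section
/- Let C be a pointed category with finite limits and cokernels, and E a pullback-stable class of morphisms containing all isomorphisms that satisfies the E-short five lemma. Then the relative Hofmann axiom holds: if in a commutative square w f' = v f with f, f' ∈ E, w a monomorphism, v a normal monomorphism, and ker(f') factoring through w, then w is a normal monomorphism. -/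
/-! The square `f ≫ v = w ≫ f'` is in fact a pullback. Both `f` and the projection
`B ×_{B'} A' ⟶ B` (which lies in `E` by pullback stability) have kernel `ker f'`: since `v` and `w`
are monic, a morphism is killed by `f` iff its composite with `w` is killed by `f'`, and
`ker f' ≤ w`. The `E`-short five lemma then makes the comparison map `A ⟶ B ×_{B'} A'` an
isomorphism, and a pullback of the normal monomorphism `v` is normal. -/

open CategoryTheory CategoryTheory.Limits ZeroObject

universe v u v' u'

namespace RelHom

variable {C : Type u} [Category.{v} C]

variable [HasZeroMorphisms C]

def isKernelMonoComp {X Y Z K : C} {g : Y ⟶ Z} {k : K ⟶ Y} {hk : k ≫ g = 0}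
    (hl : IsLimit (KernelFork.ofι k hk)) (m : X ⟶ Y) [Mono m] (t : K ⟶ X) (ht : t ≫ m = k) :
    IsLimit (KernelFork.ofι t (show t ≫ m ≫ g = 0 by rw [← Category.assoc, ht, hk])) :=
  have : Mono t := by
    have : Mono k := mono_of_isLimit_fork hl
    exact mono_of_mono_fac ht
  KernelFork.IsLimit.ofι' t _ fun x hx =>
    let l := KernelFork.IsLimit.lift' hl (x ≫ m) (by rwa [Category.assoc])
    ⟨l.1, by rw [← cancel_mono m, Category.assoc, ht]; exact l.2⟩

def isKernelOfCommSqMono {X Y Z Z' K : C} {m : X ⟶ Y} {g : Y ⟶ Z} {h : X ⟶ Z'} {n : Z' ⟶ Z}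
    [Mono m] [Mono n] (sq : m ≫ g = h ≫ n) {k : K ⟶ Y} {hk : k ≫ g = 0}
    (hl : IsLimit (KernelFork.ofι k hk)) (t : K ⟶ X) (ht : t ≫ m = k) (hth : t ≫ h = 0) :
    IsLimit (KernelFork.ofι t hth) :=
  isKernelOfComp n (m ≫ g) (isKernelMonoComp hl m t ht) hth sq.symm

theorem ShortFive.isPullback {E : MorphismProperty C} (h5 : ShortFive E)
    (hstb : PullbackStable E) {A B A' B' : C} {f : A ⟶ B} {f' : A' ⟶ B'} {w : A ⟶ A'}
    {v : B ⟶ B'} [HasKernel f'] [HasPullback v f'] [Mono w] [Mono v] (sq : f ≫ v = w ≫ f')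
    (hf : E f) (hf' : E f') {t : kernel f' ⟶ A} (ht : t ≫ w = kernel.ι f') :
    IsPullback f w v f' := by
  have hfst : E (pullback.fst v f') := hstb _ _ _ _ (.of_hasPullback v f') hf'
  have htf : t ≫ f = 0 := by
    rw [← cancel_mono v, Category.assoc, sq, ← Category.assoc, ht, kernel.condition, zero_comp]
  have hker_f : IsLimit (KernelFork.ofι t htf) :=
    isKernelOfCommSqMono sq.symm (hk := kernel.condition f') (kernelIsKernel f') t ht htf
  let j : kernel f' ⟶ pullback v f' := pullback.lift 0 (kernel.ι f') (by simp)
  have hker_fst : IsLimit (KernelFork.ofι j (pullback.lift_fst _ _ _)) :=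
    isKernelOfCommSqMono pullback.condition.symm (hk := kernel.condition f') (kernelIsKernel f')
      j (pullback.lift_snd _ _ _) _
  let u : A ⟶ pullback v f' := pullback.lift f w sq
  have htu : t ≫ u = j := by
    rw [← cancel_mono (pullback.snd v f'), Category.assoc, pullback.lift_snd, pullback.lift_snd, ht]
  have : IsIso u := h5 t j f _ u htf _ hker_f hker_fst hf hfst (pullback.lift_fst _ _ _) htu
  exact .of_iso_pullback ⟨sq⟩ (asIso u) (pullback.lift_fst _ _ _) (pullback.lift_snd _ _ _)

theorem statement2_general [HasFiniteLimits C]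
    (E : MorphismProperty C) (hstb : PullbackStable E)
    (h5 : ShortFive E) {A B A' B' : C} (f : A ⟶ B) (f' : A' ⟶ B')
    (w : A ⟶ A') (v : B ⟶ B') (hsq : w ≫ f' = f ≫ v)
    (hf : E f) (hf' : E f') (hw : Mono w) (hv : Nonempty (NormalMono v))
    (hle : ∃ t : kernel f' ⟶ A, t ≫ w = kernel.ι f') :
    Nonempty (NormalMono w) := by
  obtain ⟨hv⟩ := hv
  obtain ⟨t, ht⟩ := hle
  have hpb : IsPullback f w v f' := h5.isPullback hstb hsq.symm hf hf' ht
  exact ⟨normalOfIsPullbackSndOfNormal hpb.w hpb.isLimit⟩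

theorem statement2 [HasZeroObject C] [HasFiniteLimits C] [HasCokernels C]
    (E : MorphismProperty C) (hiso : ContainsIsos E) (hstb : PullbackStable E)
    (h5 : ShortFive E) {A B A' B' : C} (f : A ⟶ B) (f' : A' ⟶ B')
    (w : A ⟶ A') (v : B ⟶ B') (hsq : w ≫ f' = f ≫ v)
    (hf : E f) (hf' : E f') (hw : Mono w) (hv : Nonempty (NormalMono v))
    (hle : ∃ t : kernel f' ⟶ A, t ≫ w = kernel.ι f') :
    Nonempty (NormalMono w) :=
  statement2_general E hstb h5 f f' w v hsq hf hf' hw hv hle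

end RelHom
end

section
/- Let C be a pointed category with finite limits and cokernels and E a class of morphisms containing all isomorphisms. If the E-short five lemma holds, then whenever e₁ : A → C and e₂ : B → C are in E, f : A → B satisfies e₂ f = e₁, and ker(e₁) and ker(e₂) are isomorphic as subobjects compatible with f, then f admits a factorization f = m e with m a monomorphism and e ∈ E. -/
open CategoryTheory CategoryTheory.Limits ZeroObject

universe v u v' u'

namespace RelHom

variable {C : Type u} [Category.{v} C]

variable [HasZeroMorphisms C]

theorem statement3 [HasZeroObject C] [HasFiniteLimits C] [HasCokernels C]
    (E : MorphismProperty C) (hiso : ContainsIsos E) (h5 : ShortFive E)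
    {A B Z : C} (e₁ : A ⟶ Z) (e₂ : B ⟶ Z) (f : A ⟶ B)
    (he₁ : E e₁) (he₂ : E e₂) (hcomm : f ≫ e₂ = e₁)
    (hker : Nonempty (IsLimit (KernelFork.ofι (kernel.ι e₁ ≫ f)
      (show (kernel.ι e₁ ≫ f) ≫ e₂ = 0 by
        rw [Category.assoc, hcomm, kernel.condition])))) :
    ∃ (W : C) (e : A ⟶ W) (m : W ⟶ B), E e ∧ Mono m ∧ e ≫ m = f := by
  obtain ⟨hlim⟩ := hker
  have hf : IsIso f :=
    h5 (kernel.ι e₁) (kernel.ι e₁ ≫ f) e₁ e₂ f (kernel.condition e₁)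
      (by rw [Category.assoc, hcomm, kernel.condition])
      (kernelIsKernel e₁) hlim he₁ he₂ hcomm rfl
  exact ⟨B, f, 𝟙 B, hiso f hf, inferInstance, Category.comp_id f⟩

end RelHom
end

section
/- Let C be a pointed category with finite limits and cokernels and E a class of morphisms containing all isomorphisms. Assume every morphism in E is a normal epimorphism, the relative Hofmann axiom holds (in a commutative square v f = f' w with f, f' ∈ E, w mono, v normal mono and ker(f') ≤ w, w is a normal mono), and condition (d): whenever e₂ f = e₁ with e₁, e₂ ∈ E and Ker(e₁) = Ker(e₂), f factors as a monomorphism after a morphism in E. Then the E-short five lemma holds. -/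
open CategoryTheory CategoryTheory.Limits ZeroObject

universe v u v' u'

namespace RelHom

variable {C : Type u} [Category.{v} C]

variable [HasZeroMorphisms C]

theorem statement4 [HasZeroObject C] [HasFiniteLimits C] [HasCokernels C]
    (E : MorphismProperty C) (hiso : ContainsIsos E) (hne : AllNormalEpi E)
    (hofmann : ∀ ⦃A B A' B' : C⦄ (f : A ⟶ B) (f' : A' ⟶ B') (w : A ⟶ A') (v : B ⟶ B'),
      w ≫ f' = f ≫ v → E f → E f' → Mono w → Nonempty (NormalMono v) →
      (∃ t : kernel f' ⟶ A, t ≫ w = kernel.ι f') → Nonempty (NormalMono w))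
    (hd : ∀ ⦃A B Z : C⦄ (e₁ : A ⟶ Z) (e₂ : B ⟶ Z) (f : A ⟶ B),
      E e₁ → E e₂ → f ≫ e₂ = e₁ →
      (∀ (hk : (kernel.ι e₁ ≫ f) ≫ e₂ = 0),
        Nonempty (IsLimit (KernelFork.ofι (kernel.ι e₁ ≫ f) hk))) →
      ∃ (W : C) (e : A ⟶ W) (m : W ⟶ B), E e ∧ Mono m ∧ e ≫ m = f) :
    ShortFive E := by
  intro K A A' B k k' f f' w hk hk' hlk hlk' hEf hEf' hwf hkw
  have hkmono : Mono k := mono_of_isLimit_fork hlk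
  have hk'mono : Mono k' := mono_of_isLimit_fork hlk'
  -- identify kernel.ι f with k
  obtain ⟨i, hi⟩ := KernelFork.IsLimit.lift' hlk (kernel.ι f) (kernel.condition f)
  simp only [Fork.ι_ofι] at hi
  have hiIso : IsIso i := by
    refine ⟨kernel.lift f k hk, ?_, ?_⟩
    · rw [← cancel_mono (kernel.ι f)]
      simp [Category.assoc, kernel.lift_ι, hi]
    · rw [← cancel_mono k]
      simp only [Category.assoc, hi, kernel.lift_ι, Category.id_comp]
  have hkw' : kernel.ι f ≫ w = i ≫ k' := by
    rw [← hi, Category.assoc, hkw]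
  have hkwm : Mono (kernel.ι f ≫ w) := by
    rw [hkw']
    exact mono_comp i k'
  -- apply condition (d)
  obtain ⟨W, e, m, hEe, hmmono, hem⟩ := hd f f' w hEf hEf' hwf (by
    intro hkc
    refine ⟨KernelFork.IsLimit.ofι' _ hkc (fun x hx => ?_)⟩
    obtain ⟨l, hl⟩ := KernelFork.IsLimit.lift' hlk' x hx
    simp only [Fork.ι_ofι] at hl
    refine ⟨l ≫ inv i, ?_⟩
    rw [Category.assoc, hkw', ← Category.assoc (inv i), IsIso.inv_hom_id,
      Category.id_comp, hl])
  -- e is an isomorphism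
  obtain ⟨ne⟩ := hne e hEe
  have hgf : ne.g ≫ f = 0 := by
    rw [← hwf, ← hem, Category.assoc, ← Category.assoc ne.g, ne.w, zero_comp]
  obtain ⟨t, ht⟩ := KernelFork.IsLimit.lift' hlk ne.g hgf
  simp only [Fork.ι_ofι] at ht
  have hkemono : Mono (k ≫ e) := by
    have : Mono ((k ≫ e) ≫ m) := by rw [Category.assoc, hem, hkw]; exact hk'mono
    exact mono_of_mono (k ≫ e) m
  have htz : t = 0 := by
    have : t ≫ (k ≫ e) = 0 ≫ (k ≫ e) := by
      rw [← Category.assoc, ht, ne.w, zero_comp]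
    exact (cancel_mono (k ≫ e)).mp this
  have hgz : ne.g = 0 := by rw [← ht, htz, zero_comp]
  obtain ⟨s, hs⟩ := CokernelCofork.IsColimit.desc' ne.isColimit (𝟙 A)
    (by rw [hgz, zero_comp])
  simp only [Cofork.π_ofπ] at hs
  have : IsSplitMono e := ⟨⟨⟨s, hs⟩⟩⟩
  have : Epi e := by
    have := epi_of_isColimit_cofork ne.isColimit
    simpa using this
  have heIso : IsIso e := isIso_of_epi_of_isSplitMono e
  have hwmono : Mono w := by rw [← hem]; exact mono_comp e m
  -- apply the Hofmann axiom to get that w is a normal mono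
  have hidnm : Nonempty (NormalMono (𝟙 B)) := by
    refine ⟨⟨0, (0 : B ⟶ (0 : C)), by simp, ?_⟩⟩
    exact KernelFork.IsLimit.ofι _ _ (fun x _ => x) (fun x _ => Category.comp_id x)
      (fun x hx l hl => by simpa using hl)
  obtain ⟨j2, hj2⟩ := KernelFork.IsLimit.lift' hlk' (kernel.ι f') (kernel.condition f')
  simp only [Fork.ι_ofι] at hj2
  obtain ⟨nm⟩ := hofmann f f' w (𝟙 B) (by rw [hwf, Category.comp_id]) hEf hEf' hwmono hidnm
    ⟨j2 ≫ k, by rw [Category.assoc, hkw, hj2]⟩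
  -- show that the cokernel-side morphism of nm is zero
  obtain ⟨nef'⟩ := hne f' hEf'
  obtain ⟨s2, hs2⟩ := KernelFork.IsLimit.lift' hlk' nef'.g nef'.w
  simp only [Fork.ι_ofι] at hs2
  have hk'q : k' ≫ nm.g = 0 := by rw [← hkw, Category.assoc, nm.w, comp_zero]
  have hg0q : nef'.g ≫ nm.g = 0 := by rw [← hs2, Category.assoc, hk'q, comp_zero]
  obtain ⟨r, hr⟩ := CokernelCofork.IsColimit.desc' nef'.isColimit nm.g hg0q
  simp only [Cofork.π_ofπ] at hr
  have hfepi : Epi f := by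
    obtain ⟨nef⟩ := hne f hEf
    have := epi_of_isColimit_cofork nef.isColimit
    simpa using this
  have hr0 : r = 0 := by
    have : f ≫ r = f ≫ 0 := by
      rw [comp_zero, ← hwf, Category.assoc, hr, nm.w]
    exact (cancel_epi f).mp this
  have hq0 : nm.g = 0 := by rw [← hr, hr0, comp_zero]
  -- w is a split epi, hence iso
  obtain ⟨s3, hs3⟩ := KernelFork.IsLimit.lift' nm.isLimit (𝟙 A') (by rw [hq0, comp_zero])
  simp only [Fork.ι_ofι] at hs3
  have : IsSplitEpi w := ⟨⟨⟨s3, hs3⟩⟩⟩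
  exact isIso_of_mono_of_isSplitEpi w

end RelHom
end

section
/- Let (C, E) satisfy: E is pullback stable, every morphism in E is a normal epimorphism, E is closed under composition, and if f ∈ E and g f ∈ E then g ∈ E. Suppose that in every commutative diagram with rows K →k A →f B and K' →k' A' →f' B, where k = ker(f), k' = ker(f'), vertical maps u : K → K' and w : A → A' (with identity on B), and f, f', u ∈ E, the morphism w is also in E (condition (g)). Then the E-short five lemma holds: when u is the identity, w is an isomorphism. -/
open CategoryTheory CategoryTheory.Limits ZeroObject

universe v u v' u'

namespace RelHom

variable {C : Type u} [Category.{v} C]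

variable [HasZeroMorphisms C]

theorem statement6 [HasZeroObject C] [HasFiniteLimits C] [HasCokernels C]
    (E : MorphismProperty C) (hiso : ContainsIsos E) (hstb : PullbackStable E)
    (hne : AllNormalEpi E) (hcomp : CompClosed E) (hcan : RightCancel E)
    (hg : KernelLadder E) : ShortFive E := by
  intro K A A' B k k' f f' w hk hk' hlk hlk' hEf hEf' hwf hkw
  have hEw : E w := hg k k' f f' (𝟙 K) w hk hk' hlk hlk' hEf hEf'
    (hiso _ inferInstance) hwf (by simpa using hkw)
  obtain ⟨ne⟩ := hne w hEw
  have hgf : ne.g ≫ f = 0 := by rw [← hwf, ← Category.assoc, ne.w, zero_comp]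
  have hk'mono : Mono k' := mono_of_isLimit_fork hlk'
  obtain ⟨t, ht⟩ := KernelFork.IsLimit.lift' hlk ne.g hgf
  simp only [Fork.ι_ofι] at ht
  have htk' : t ≫ k' = 0 := by
    rw [← hkw, ← Category.assoc, ht, ne.w]
  have ht0 : t = 0 := zero_of_comp_mono k' htk'
  have hg0 : ne.g = 0 := by rw [← ht, ht0, zero_comp]
  have hepi : Epi w := epi_of_isColimit_cofork ne.isColimit
  let d : A' ⟶ A := ne.isColimit.desc (CokernelCofork.ofπ (𝟙 A) (by rw [hg0, zero_comp]))
  have hwd : w ≫ d = 𝟙 A := ne.isColimit.fac _ WalkingParallelPair.one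
  refine ⟨d, hwd, ?_⟩
  rw [← cancel_epi w, ← Category.assoc, hwd, Category.id_comp, Category.comp_id]


end RelHom
end

section
/- Relative 3×3 lemma: Let (C, E) be a relative homological category. Consider a commutative 3×3 diagram whose three columns (0 → A → A' → A'' → 0, etc.) and middle row (0 → A' → B' → C' → 0) are E-exact short exact sequences. Then the top row 0 → A → B → C → 0 is E-exact if and only if the bottom row 0 → A'' → B'' → C'' → 0 is E-exact. -/
/-!
Let `P` be the pullback of `c` and `g'`. Its projection to `Z` is in `E` (a pullback of `g'`),
its kernel is `A'`, and `B ⟶ P` is the kernel of the induced map from `P` into `A''`, or into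
`ker g''`. The key fact is a symmetry for two maps `p : P ⟶ Y`, `q : P ⟶ W` with kernels
`kp, kq`, when `W ⟶ 0` is in `E`: if `p ∈ E` and `kp ≫ q ∈ E` then `kq ≫ p ∈ E`.
If the bottom row is exact, this turns `a' ∈ E` into `g ∈ E`. If the top row is exact, it
turns `g ∈ E` into `A'' ⟶ ker g''` being in `E`; a diagram chase shows that this map has zero
kernel, and an `E`-map with zero kernel is an isomorphism, being the cokernel of zero. The
kernel conditions are routine diagram chases.
-/

open CategoryTheory CategoryTheory.Limits ZeroObject

universe v u v' u'

namespace RelHom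

variable {C : Type u} [Category.{v} C]

lemma isPullback_of_mono_of_exists_lift {P X Y Z : C} {fst : P ⟶ X} {snd : P ⟶ Y}
    {f : X ⟶ Z} {g : Y ⟶ Z} [Mono f] [Mono snd] (w : fst ≫ f = snd ≫ g)
    (hlift : ∀ ⦃T : C⦄ (x : T ⟶ X) (y : T ⟶ Y), x ≫ f = y ≫ g → ∃ l : T ⟶ P, l ≫ snd = y) :
    IsPullback fst snd f g := by
  choose l hl using fun s : PullbackCone f g => hlift s.fst s.snd s.condition
  refine IsPullback.of_isLimit (PullbackCone.IsLimit.mk w l (fun s => ?_) hl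
    (fun s m _ hm => by rw [← cancel_mono snd, hm, hl]))
  rw [← cancel_mono f, Category.assoc, w, reassoc_of% hl, s.condition]

variable [HasZeroMorphisms C]

section

variable {E : MorphismProperty C}

lemma AllNormalEpi.isIso_of_comp_eq_zero (hE : AllNormalEpi E) {X Y : C} {f : X ⟶ Y}
    (hf : E f) (hker : ∀ ⦃T : C⦄ (s : T ⟶ X), s ≫ f = 0 → s = 0) : IsIso f := by
  obtain ⟨nf⟩ := hE f hf
  exact CokernelCofork.IsColimit.isIso_π _ nf.isColimit (hker _ nf.w)

lemma PullbackStable.eq_zero_of_comp_eq_zero [HasPullbacks C] (hS : PullbackStable E)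
    (hN : AllNormalEpi E) {A' A'' B'' : C} {a' : A' ⟶ A''} (ha' : E a') {f'' : A'' ⟶ B''}
    (h : ∀ ⦃T : C⦄ (x : T ⟶ A'), x ≫ a' ≫ f'' = 0 → x ≫ a' = 0) ⦃T : C⦄ (s : T ⟶ A'')
    (hs : s ≫ f'' = 0) : s = 0 := by
  obtain ⟨_⟩ := hN _ (hS _ _ _ _ (IsPullback.of_hasPullback s a') ha')
  rw [← cancel_epi (pullback.fst s a'), comp_zero, pullback.condition]
  exact h _ (by rw [← pullback.condition_assoc, hs, comp_zero])

noncomputable def isLimitProdInr (Y W : C) [HasBinaryProduct Y W] :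
    IsLimit (KernelFork.ofι (prod.inr Y W) (prod.inr_fst Y W)) :=
  KernelFork.IsLimit.ofι' _ _ fun t ht => ⟨t ≫ prod.snd, by ext <;> simp [ht]⟩

lemma isPullback_prod_inl {P Y W Kq : C} [HasBinaryProduct Y W] {p : P ⟶ Y} {q : P ⟶ W}
    {kq : Kq ⟶ P} {hkq : kq ≫ q = 0} (hlimq : IsLimit (KernelFork.ofι kq hkq)) :
    IsPullback (kq ≫ p) kq (prod.inl Y W) (prod.lift p q) := by
  have : Mono kq := Fork.IsLimit.mono hlimq
  refine isPullback_of_mono_of_exists_lift (by ext <;> simp [prod.lift_fst, prod.lift_snd, hkq])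
    fun T x y hxy => ?_
  have hyq : y ≫ q = 0 := by
    simpa [prod.lift_snd] using (congrArg (· ≫ prod.snd) hxy).symm
  obtain ⟨l, hl⟩ := KernelFork.IsLimit.lift' hlimq y hyq
  exact ⟨l, hl⟩

noncomputable def isLimitKernelForkOfComp {K P X Y Z : C} {k : K ⟶ X} {g : X ⟶ Y}
    {hk : k ≫ g = 0} (hlim : IsLimit (KernelFork.ofι k hk)) {n : P ⟶ X} [Mono n] {m : Z ⟶ Y}
    [Mono m] {θ : P ⟶ Z} (hθ : θ ≫ m = n ≫ g) {l : K ⟶ P} (hl : l ≫ n = k)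
    (hlθ : l ≫ θ = 0) : IsLimit (KernelFork.ofι l hlθ) :=
  have : Mono k := Fork.IsLimit.mono hlim
  have : Mono l := mono_of_mono_fac hl
  KernelFork.IsLimit.ofι' _ _ fun t ht => by
    obtain ⟨s, hs : s ≫ k = t ≫ n⟩ :=
      KernelFork.IsLimit.lift' hlim (t ≫ n) (by simp [← hθ, reassoc_of% ht])
    exact ⟨s, by rw [← cancel_mono n, Category.assoc, hl, hs]⟩

/-- `P = g'⁻¹(Z)` is also `b'⁻¹(K)`: `θ` gives one inclusion, and `b'⁻¹(K)` is killed by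
`b' ≫ g'' = g' ≫ c'`, so it lies in `g'⁻¹(ker c') = P`. -/
lemma isPullback_of_isLimit_of_comp {P Z Z' Z'' B' B'' K : C} {fst : P ⟶ Z} {snd : P ⟶ B'}
    {c : Z ⟶ Z'} {g' : B' ⟶ Z'} (sq : IsPullback fst snd c g') {c' : Z' ⟶ Z''}
    {hc : c ≫ c' = 0} (hlimc : IsLimit (KernelFork.ofι c hc)) {b' : B' ⟶ B''}
    {g'' : B'' ⟶ Z''} (sq4 : g' ≫ c' = b' ≫ g'') {ι : K ⟶ B''} [Mono ι] (hι : ι ≫ g'' = 0)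
    {θ : P ⟶ K} (hθ : θ ≫ ι = snd ≫ b') : IsPullback θ snd ι b' := by
  have : Mono c := Fork.IsLimit.mono hlimc
  have : Mono snd := sq.mono_snd_of_mono
  refine isPullback_of_mono_of_exists_lift hθ fun T x y hxy => ?_
  obtain ⟨z, hz⟩ := KernelFork.IsLimit.lift' hlimc (y ≫ g')
    (by rw [Category.assoc, sq4, ← Category.assoc, ← hxy, Category.assoc, hι, comp_zero])
  exact ⟨sq.lift z y hz, sq.lift_snd _ _ _⟩

lemma comp_eq_zero_of_comp_comp_eq_zero {A B Z A' B' Z' A'' B'' : C} {f : A ⟶ B} {g : B ⟶ Z}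
    {f' : A' ⟶ B'} {g' : B' ⟶ Z'} {f'' : A'' ⟶ B''} {a : A ⟶ A'} {a' : A' ⟶ A''}
    {b : B ⟶ B'} {b' : B' ⟶ B''} {c : Z ⟶ Z'} [Mono f'] [Mono c] (sq1 : f ≫ b = a ≫ f')
    (sq2 : g ≫ c = b ≫ g') (sq3 : f' ≫ b' = a' ≫ f'') (ha0 : a ≫ a' = 0) {hb0 : b ≫ b' = 0}
    (hmid0 : f' ≫ g' = 0) {htop0 : f ≫ g = 0} (hlimf : IsLimit (KernelFork.ofι f htop0))
    (hlimb : IsLimit (KernelFork.ofι b hb0)) ⦃T : C⦄ (x : T ⟶ A') (hx : x ≫ a' ≫ f'' = 0) :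
    x ≫ a' = 0 := by
  obtain ⟨u, hu : u ≫ b = x ≫ f'⟩ :=
    KernelFork.IsLimit.lift' hlimb (x ≫ f') (by rw [Category.assoc, sq3, hx])
  obtain ⟨v, hv : v ≫ f = u⟩ := KernelFork.IsLimit.lift' hlimf u
    (by rw [← cancel_mono c, Category.assoc, sq2, reassoc_of% hu, hmid0, comp_zero, zero_comp])
  have hva : v ≫ a = x := by
    rw [← cancel_mono f', Category.assoc, ← sq1, reassoc_of% hv, hu]
  rw [← hva, Category.assoc, ha0, comp_zero]

noncomputable def isLimitKernelForkTopOfMono {A B Z A' B' Z' A'' B'' : C} {f : A ⟶ B}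
    {g : B ⟶ Z} {f' : A' ⟶ B'} {g' : B' ⟶ Z'} {f'' : A'' ⟶ B''} {a : A ⟶ A'} {a' : A' ⟶ A''}
    {b : B ⟶ B'} {b' : B' ⟶ B''} {c : Z ⟶ Z'} [Mono f''] [Mono b] (sq1 : f ≫ b = a ≫ f')
    (sq2 : g ≫ c = b ≫ g') (sq3 : f' ≫ b' = a' ≫ f'') {ha0 : a ≫ a' = 0} (hb0 : b ≫ b' = 0)
    {hmid0 : f' ≫ g' = 0} (htop0 : f ≫ g = 0) (hlima : IsLimit (KernelFork.ofι a ha0))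
    (hlimf' : IsLimit (KernelFork.ofι f' hmid0)) : IsLimit (KernelFork.ofι f htop0) :=
  have : Mono a := Fork.IsLimit.mono hlima
  have : Mono f' := Fork.IsLimit.mono hlimf'
  have : Mono f := mono_of_mono_fac sq1
  KernelFork.IsLimit.ofι' _ _ fun t ht => by
    obtain ⟨s, hs : s ≫ f' = t ≫ b⟩ := KernelFork.IsLimit.lift' hlimf' (t ≫ b)
      (by rw [Category.assoc, ← sq2, reassoc_of% ht, zero_comp])
    obtain ⟨r, hr : r ≫ a = s⟩ := KernelFork.IsLimit.lift' hlima s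
      (by rw [← cancel_mono f'', Category.assoc, ← sq3, reassoc_of% hs, hb0, comp_zero, zero_comp])
    exact ⟨r, by rw [← cancel_mono b, Category.assoc, sq1, reassoc_of% hr, hs]⟩

variable [HasZeroObject C]

lemma isPullback_zero_of_isLimit {K X Y : C} {k : K ⟶ X} {f : X ⟶ Y} {hk : k ≫ f = 0}
    (hlim : IsLimit (KernelFork.ofι k hk)) : IsPullback (0 : K ⟶ 0) k (0 : 0 ⟶ Y) f := by
  have : Mono k := Fork.IsLimit.mono hlim
  refine isPullback_of_mono_of_exists_lift (by simp [hk]) fun T x y hxy => ?_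
  obtain ⟨l, hl⟩ := KernelFork.IsLimit.lift' hlim y (by simp [← hxy])
  exact ⟨l, hl⟩

lemma PullbackStable.mem_zero_of_isLimit (hE : PullbackStable E) {K X Y : C} {k : K ⟶ X}
    {f : X ⟶ Y} {hk : k ≫ f = 0} (hlim : IsLimit (KernelFork.ofι k hk)) (hf : E f) :
    E (0 : K ⟶ 0) :=
  hE _ _ _ _ (isPullback_zero_of_isLimit hlim) hf

lemma PullbackStable.mem_prod_fst (hE : PullbackStable E) (Y W : C) [HasBinaryProduct Y W]
    (hW : E (0 : W ⟶ 0)) : E (prod.fst : Y ⨯ W ⟶ Y) :=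
  hE _ _ _ _ IsPullback.of_hasBinaryProduct hW

lemma KernelLadder.mem_prod_lift (hL : KernelLadder E) (hS : PullbackStable E)
    {P Y W Kp : C} [HasBinaryProduct Y W] {p : P ⟶ Y} {q : P ⟶ W} {kp : Kp ⟶ P}
    {hkp : kp ≫ p = 0} (hlimp : IsLimit (KernelFork.ofι kp hkp)) (hp : E p) (hq : E (kp ≫ q))
    (hW : E (0 : W ⟶ 0)) : E (prod.lift p q) :=
  hL kp (prod.inr Y W) p prod.fst (kp ≫ q) (prod.lift p q) hkp (prod.inr_fst Y W) hlimp
    (isLimitProdInr Y W) hp (hS.mem_prod_fst Y W hW) hq (prod.lift_fst p q)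
    (by ext <;> simp [prod.lift_fst, prod.lift_snd, hkp])

/-- `kq ≫ p` is the pullback of `(p, q) ∈ E` along `prod.inl`. -/
lemma KernelLadder.mem_comp_of_mem_comp (hL : KernelLadder E) (hS : PullbackStable E)
    {P Y W Kp Kq : C} [HasBinaryProduct Y W] {p : P ⟶ Y} {q : P ⟶ W} {kp : Kp ⟶ P}
    {kq : Kq ⟶ P} {hkp : kp ≫ p = 0} {hkq : kq ≫ q = 0}
    (hlimp : IsLimit (KernelFork.ofι kp hkp)) (hlimq : IsLimit (KernelFork.ofι kq hkq))
    (hp : E p) (hq : E (kp ≫ q)) (hW : E (0 : W ⟶ 0)) : E (kq ≫ p) :=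
  hS _ _ _ _ (isPullback_prod_inl hlimq) (hL.mem_prod_lift hS hlimp hp hq hW)

variable [HasFiniteLimits C] {A B Z A' B' Z' A'' B'' Z'' : C} {f : A ⟶ B} {g : B ⟶ Z}
  {f' : A' ⟶ B'} {g' : B' ⟶ Z'} {f'' : A'' ⟶ B''} {g'' : B'' ⟶ Z''} {a : A ⟶ A'}
  {a' : A' ⟶ A''} {b : B ⟶ B'} {b' : B' ⟶ B''} {c : Z ⟶ Z'} {c' : Z' ⟶ Z''}

lemma shortEExact_bottom_of_top (hE : Homological E) (sq1 : f ≫ b = a ≫ f')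
    (sq2 : g ≫ c = b ≫ g') (sq3 : f' ≫ b' = a' ≫ f'') (sq4 : g' ≫ c' = b' ≫ g'')
    (ha0 : a ≫ a' = 0) {hb0 : b ≫ b' = 0} {hc0 : c ≫ c' = 0} {hmid0 : f' ≫ g' = 0}
    {htop0 : f ≫ g = 0} (hbot0 : f'' ≫ g'' = 0) (ha' : E a')
    (hlimb : IsLimit (KernelFork.ofι b hb0)) (hb' : E b')
    (hlimc : IsLimit (KernelFork.ofι c hc0)) (hc' : E c')
    (hlimf' : IsLimit (KernelFork.ofι f' hmid0)) (hg' : E g')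
    (htop : ShortEExact E f g htop0) : ShortEExact E f'' g'' hbot0 := by
  obtain ⟨⟨hlimf⟩, hg⟩ := htop
  have : Mono c := Fork.IsLimit.mono hlimc
  have : Mono f' := Fork.IsLimit.mono hlimf'
  let j : A' ⟶ pullback c g' := pullback.lift 0 f' (by simp [hmid0])
  let h : B ⟶ pullback c g' := pullback.lift g b sq2
  let θ := kernel.lift g'' (pullback.snd c g' ≫ b')
    (by rw [Category.assoc, ← sq4, ← pullback.condition_assoc, hc0, comp_zero])
  have hlimj : IsLimit (KernelFork.ofι j (pullback.lift_fst _ _ _)) :=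
    isLimitKernelForkOfComp hlimf' pullback.condition (pullback.lift_snd _ _ _) _
  have hlimh : IsLimit (KernelFork.ofι h (_ : h ≫ θ = 0)) :=
    isLimitKernelForkOfComp hlimb (kernel.lift_ι _ _ _) (pullback.lift_snd _ _ _) (by
      rw [← cancel_mono (kernel.ι g''), Category.assoc, kernel.lift_ι, pullback.lift_snd_assoc,
        hb0, zero_comp])
  have hθ : E θ := hE.stable _ _ _ _ (isPullback_of_isLimit_of_comp
    (IsPullback.of_hasPullback c g') hlimc sq4 (kernel.condition g'') (kernel.lift_ι _ _ _)) hb'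
  have hjθ : E (j ≫ θ) := hE.ladder.mem_comp_of_mem_comp hE.stable hlimh hlimj hθ
    (by rwa [pullback.lift_fst]) (hE.stable.mem_zero_of_isLimit hlimc hc')
  let φ := kernel.lift g'' f'' hbot0
  have hφ : E φ := hE.right_cancel a' φ ha' (by
    rwa [show a' ≫ φ = j ≫ θ by
      ext; simp only [j, θ, φ, Category.assoc, kernel.lift_ι, pullback.lift_snd_assoc, sq3]])
  have : IsIso φ := hE.normal_epi.isIso_of_comp_eq_zero hφ fun T s hs =>
    hE.stable.eq_zero_of_comp_eq_zero hE.normal_epi ha'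
      (comp_eq_zero_of_comp_comp_eq_zero sq1 sq2 sq3 ha0 hmid0 hlimf hlimb) s
      (by rw [← kernel.lift_ι g'' f'' hbot0, reassoc_of% hs, zero_comp])
  refine ⟨⟨IsLimit.ofIsoLimit (kernelIsKernel g'') (Fork.ext (asIso φ).symm ?_)⟩, ?_⟩
  · simp [φ]
  · exact hE.right_cancel b' g'' hb' (sq4 ▸ hE.comp_closed _ _ hg' hc')

lemma shortEExact_top_of_bottom (hE : Homological E) (sq1 : f ≫ b = a ≫ f')
    (sq2 : g ≫ c = b ≫ g') (sq3 : f' ≫ b' = a' ≫ f'') (sq4 : g' ≫ c' = b' ≫ g'')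
    {ha0 : a ≫ a' = 0} (hb0 : b ≫ b' = 0) (hc0 : c ≫ c' = 0) {hmid0 : f' ≫ g' = 0}
    (htop0 : f ≫ g = 0) {hbot0 : f'' ≫ g'' = 0} (hlima : IsLimit (KernelFork.ofι a ha0))
    (ha' : E a') (hlimb : IsLimit (KernelFork.ofι b hb0)) (hlimc : IsLimit (KernelFork.ofι c hc0))
    (hlimf' : IsLimit (KernelFork.ofι f' hmid0)) (hg' : E g')
    (hbot : ShortEExact E f'' g'' hbot0) : ShortEExact E f g htop0 := by
  obtain ⟨⟨hlimf''⟩, -⟩ := hbot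
  have : Mono b := Fork.IsLimit.mono hlimb
  have : Mono c := Fork.IsLimit.mono hlimc
  have : Mono f'' := Fork.IsLimit.mono hlimf''
  obtain ⟨θ, hθ : θ ≫ f'' = pullback.snd c g' ≫ b'⟩ :=
    KernelFork.IsLimit.lift' hlimf'' (pullback.snd c g' ≫ b')
      (by rw [Category.assoc, ← sq4, ← pullback.condition_assoc, hc0, comp_zero])
  let j : A' ⟶ pullback c g' := pullback.lift 0 f' (by simp [hmid0])
  let h : B ⟶ pullback c g' := pullback.lift g b sq2
  have hlimj : IsLimit (KernelFork.ofι j (pullback.lift_fst _ _ _)) :=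
    isLimitKernelForkOfComp hlimf' pullback.condition (pullback.lift_snd _ _ _) _
  have hlimh : IsLimit (KernelFork.ofι h (_ : h ≫ θ = 0)) :=
    isLimitKernelForkOfComp hlimb hθ (pullback.lift_snd _ _ _) (by
      rw [← cancel_mono f'', Category.assoc, hθ, pullback.lift_snd_assoc, hb0, zero_comp])
  have hjθ : j ≫ θ = a' := by
    rw [← cancel_mono f'', Category.assoc, hθ, pullback.lift_snd_assoc, sq3]
  have hA'' : E (0 : A'' ⟶ 0) := hE.right_cancel a' 0 ha' (by
    rw [comp_zero]; exact hE.stable.mem_zero_of_isLimit hlimf' hg')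
  have hg : E (h ≫ pullback.fst c g') := hE.ladder.mem_comp_of_mem_comp hE.stable hlimj hlimh
    (hE.stable _ _ _ _ (IsPullback.of_hasPullback c g') hg') (hjθ ▸ ha') hA''
  rw [pullback.lift_fst] at hg
  exact ⟨⟨isLimitKernelForkTopOfMono sq1 sq2 sq3 hb0 htop0 hlima hlimf'⟩, hg⟩

end

theorem statement13_general [HasZeroObject C] [HasFiniteLimits C]
    (E : MorphismProperty C) (hE : Homological E)
    {A B Z A' B' Z' A'' B'' Z'' : C}
    (f : A ⟶ B) (g : B ⟶ Z) (f' : A' ⟶ B') (g' : B' ⟶ Z')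
    (f'' : A'' ⟶ B'') (g'' : B'' ⟶ Z'')
    (a : A ⟶ A') (a' : A' ⟶ A'') (b : B ⟶ B') (b' : B' ⟶ B'')
    (c : Z ⟶ Z') (c' : Z' ⟶ Z'')
    (sq1 : f ≫ b = a ≫ f') (sq2 : g ≫ c = b ≫ g')
    (sq3 : f' ≫ b' = a' ≫ f'') (sq4 : g' ≫ c' = b' ≫ g'')
    (ha0 : a ≫ a' = 0) (hb0 : b ≫ b' = 0) (hc0 : c ≫ c' = 0)
    (hcolA : ShortEExact E a a' ha0) (hcolB : ShortEExact E b b' hb0)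
    (hcolC : ShortEExact E c c' hc0)
    (hmid0 : f' ≫ g' = 0) (hmid : ShortEExact E f' g' hmid0)
    (htop0 : f ≫ g = 0) (hbot0 : f'' ≫ g'' = 0) :
    ShortEExact E f g htop0 ↔ ShortEExact E f'' g'' hbot0 := by
  obtain ⟨⟨hlima⟩, ha'⟩ := hcolA
  obtain ⟨⟨hlimb⟩, hb'⟩ := hcolB
  obtain ⟨⟨hlimc⟩, hc'⟩ := hcolC
  obtain ⟨⟨hlimf'⟩, hg'⟩ := hmid
  exact ⟨shortEExact_bottom_of_top hE sq1 sq2 sq3 sq4 ha0 hbot0 ha' hlimb hb' hlimc hc' hlimf' hg',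
    shortEExact_top_of_bottom hE sq1 sq2 sq3 sq4 hb0 hc0 htop0 hlima ha' hlimb hlimc hlimf' hg'⟩

theorem statement13 [HasZeroObject C] [HasFiniteLimits C] [HasCokernels C]
    (E : MorphismProperty C) (hE : Homological E)
    {A B Z A' B' Z' A'' B'' Z'' : C}
    (f : A ⟶ B) (g : B ⟶ Z) (f' : A' ⟶ B') (g' : B' ⟶ Z')
    (f'' : A'' ⟶ B'') (g'' : B'' ⟶ Z'')
    (a : A ⟶ A') (a' : A' ⟶ A'') (b : B ⟶ B') (b' : B' ⟶ B'')
    (c : Z ⟶ Z') (c' : Z' ⟶ Z'')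
    (sq1 : f ≫ b = a ≫ f') (sq2 : g ≫ c = b ≫ g')
    (sq3 : f' ≫ b' = a' ≫ f'') (sq4 : g' ≫ c' = b' ≫ g'')
    (ha0 : a ≫ a' = 0) (hb0 : b ≫ b' = 0) (hc0 : c ≫ c' = 0)
    (hcolA : ShortEExact E a a' ha0) (hcolB : ShortEExact E b b' hb0)
    (hcolC : ShortEExact E c c' hc0)
    (hmid0 : f' ≫ g' = 0) (hmid : ShortEExact E f' g' hmid0)
    (htop0 : f ≫ g = 0) (hbot0 : f'' ≫ g'' = 0) :
    ShortEExact E f g htop0 ↔ ShortEExact E f'' g'' hbot0 :=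
  statement13_general E hE f g f' g' f'' g'' a a' b b' c c' sq1 sq2 sq3 sq4 ha0 hb0 hc0 hcolA hcolB
    hcolC hmid0 hmid htop0 hbot0

end RelHom
end

section
/- Relative snake lemma: Let (C, E) be a relative homological category. Given a commutative diagram with E-exact columns 0 → Ker(u) → A → A' → Coker(u) → 0 (similarly for v, w), a middle row A →f B →g C → 0 that is E-exact at B and C, and a bottom row 0 → A' →f' B' →g' C' that is E-exact at A' and B', with g' ∈ E. Then there exists a connecting morphism d : Ker(w) → Coker(u) making the sequence Ker(u) → Ker(v) → Ker(w) →d Coker(u) → Coker(v) → Coker(w) E-exact. -/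
open CategoryTheory CategoryTheory.Limits ZeroObject

universe v u v' u'

namespace RelHom

variable {C : Type u} [Category.{v} C]

variable [HasZeroMorphisms C]

section Helpers

variable {C : Type u} [Category.{v} C] [HasZeroMorphisms C]

/-- The ι of a limit kernel fork is a monomorphism. -/
lemma monoOfKernelFork {W X Y : C} {m : W ⟶ X} {g : X ⟶ Y} {hm : m ≫ g = 0}
    (h : IsLimit (KernelFork.ofι m hm)) : Mono m :=
  ⟨fun a b hab => Fork.IsLimit.hom_ext h (by simpa using hab)⟩

/-- Morphisms in `E` are epimorphisms. -/
lemma epiOfE {E : MorphismProperty C} (hNE : AllNormalEpi E) {X Y : C} {f : X ⟶ Y}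
    (hf : E f) : Epi f := by
  obtain ⟨n⟩ := hNE f hf
  constructor
  intro T a b hab
  exact Cofork.IsColimit.hom_ext n.isColimit (by simpa using hab)

/-- A kernel of a zero morphism is an isomorphism. -/
lemma isoOfKernelForkZero {W X T : C} {m : W ⟶ X} {hm : m ≫ (0 : X ⟶ T) = 0}
    (h : IsLimit (KernelFork.ofι m hm)) : IsIso m := by
  obtain ⟨l, hl⟩ := KernelFork.IsLimit.lift' h (𝟙 X) (by simp)
  have hl' : l ≫ m = 𝟙 X := by simpa using hl
  haveI := monoOfKernelFork h
  refine ⟨l, ?_, hl'⟩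
  rw [← cancel_mono m, Category.assoc, hl', Category.comp_id, Category.id_comp]

/-- If a composable pair `(h, 0)` with zero-object target is `E`-exact, then `h ∈ E`. -/
lemma EOfExactZero {E : MorphismProperty C} (hE : WeaklyHomological E) {X Y T : C}
    {h : X ⟶ Y} (hex : EExactAt E h (0 : Y ⟶ T)) : E h := by
  obtain ⟨W, e, m, hm, he, ⟨hl⟩, hem⟩ := hex
  have : IsIso m := isoOfKernelForkZero hl
  rw [← hem]; exact hE.comp_closed e m he (hE.contains_isos m this)

/-- A kernel of a morphism of `E` has `E`-zero-map to the zero object. -/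
lemma EZeroOfKernel [HasZeroObject C] {E : MorphismProperty C} (hE : WeaklyHomological E)
    {K X Y : C} {m : K ⟶ X} {p : X ⟶ Y} {hm : m ≫ p = 0}
    (hl : IsLimit (KernelFork.ofι m hm)) (hp : E p) : E (0 : K ⟶ (0 : C)) := by
  haveI := monoOfKernelFork hl
  have comm : (0 : K ⟶ (0 : C)) ≫ (0 : (0 : C) ⟶ Y) = m ≫ p := by simp [hm]
  have key : ∀ s : PullbackCone (0 : (0 : C) ⟶ Y) p, s.snd ≫ p = 0 := by
    intro s
    rw [← s.condition, comp_zero]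
  have hlim : IsLimit (PullbackCone.mk (0 : K ⟶ (0 : C)) m comm) := by
    refine PullbackCone.IsLimit.mk comm
      (fun s => (KernelFork.IsLimit.lift' hl s.snd (key s)).1) (fun s => ?_) (fun s => ?_) ?_
    · exact (isZero_zero C).eq_of_tgt _ _
    · simpa using (KernelFork.IsLimit.lift' hl s.snd (key s)).2
    · intro s t h1 h2
      rw [← cancel_mono m]
      rw [h2]
      simpa using ((KernelFork.IsLimit.lift' hl s.snd (key s)).2).symm
  exact hE.stable _ m (0 : (0 : C) ⟶ Y) p (IsPullback.of_isLimit hlim) hp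

/-- The kernel of one leg of a pullback square lifts to a kernel of the opposite projection. -/
lemma pulledBackKernel {P X Y Z K : C} {fst : P ⟶ X} {snd : P ⟶ Y}
    {f : X ⟶ Z} {g : Y ⟶ Z} (hpb : IsPullback fst snd f g)
    {k : K ⟶ Y} {hk : k ≫ g = 0} (hl : IsLimit (KernelFork.ofι k hk)) :
    ∃ (khat : K ⟶ P) (h0 : khat ≫ fst = 0),
      khat ≫ snd = k ∧ Nonempty (IsLimit (KernelFork.ofι khat h0)) := by
  haveI hkm := monoOfKernelFork hl
  have w0 : (0 : K ⟶ X) ≫ f = k ≫ g := by rw [zero_comp, hk]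
  refine ⟨hpb.lift 0 k w0, hpb.lift_fst 0 k w0, hpb.lift_snd 0 k w0, ⟨?_⟩⟩
  have hsnd : hpb.lift 0 k w0 ≫ snd = k := hpb.lift_snd 0 k w0
  haveI : Mono (hpb.lift 0 k w0 ≫ snd) := by rw [hsnd]; infer_instance
  haveI : Mono (hpb.lift 0 k w0) := mono_of_mono _ snd
  refine KernelFork.IsLimit.ofι' _ _ (fun {T} t ht => ?_)
  have htg : (t ≫ snd) ≫ g = 0 := by
    rw [Category.assoc, ← hpb.w, ← Category.assoc, ht, zero_comp]
  obtain ⟨l, hlk⟩ := KernelFork.IsLimit.lift' hl (t ≫ snd) htg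
  have hlk' : l ≫ k = t ≫ snd := by simpa using hlk
  refine ⟨l, hpb.hom_ext ?_ ?_⟩
  · rw [Category.assoc, hpb.lift_fst 0 k w0, comp_zero, ht]
  · rw [Category.assoc, hsnd, hlk']

/-- Convenient kernel-fork lifting with clean types. -/
lemma kernelForkLift {W X Y T : C} {m : W ⟶ X} {g : X ⟶ Y} {hm : m ≫ g = 0}
    (h : IsLimit (KernelFork.ofι m hm)) (k : T ⟶ X) (hk : k ≫ g = 0) :
    ∃ l : T ⟶ W, l ≫ m = k := by
  obtain ⟨l, hl⟩ := KernelFork.IsLimit.lift' h k hk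
  exact ⟨l, by simpa using hl⟩

/-- Convenient descent along a normal epimorphism. -/
lemma normalEpiDesc {X Y T : C} {p : X ⟶ Y} (n : NormalEpi p) (k : X ⟶ T)
    (hk : n.g ≫ k = 0) : ∃ l : Y ⟶ T, p ≫ l = k := by
  obtain ⟨l, hl⟩ := CokernelCofork.IsColimit.desc' n.isColimit k hk
  exact ⟨l, by simpa using hl⟩

end Helpers

set_option maxHeartbeats 2000000 in
theorem statement14 [HasZeroObject C] [HasFiniteLimits C] [HasCokernels C]
    (E : MorphismProperty C) (hE : Homological E)
    {A B Z A' B' Z' : C} (f : A ⟶ B) (g : B ⟶ Z)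
    (f' : A' ⟶ B') (g' : B' ⟶ Z')
    (u : A ⟶ A') (v : B ⟶ B') (w : Z ⟶ Z')
    (sq1 : u ≫ f' = f ≫ v) (sq2 : v ≫ g' = g ≫ w)
    (hcolu : EExactAt E (kernel.ι u) u ∧ EExactAt E u (cokernel.π u) ∧
      EExactAt E (cokernel.π u) (0 : cokernel u ⟶ (0 : C)))
    (hcolv : EExactAt E (kernel.ι v) v ∧ EExactAt E v (cokernel.π v) ∧
      EExactAt E (cokernel.π v) (0 : cokernel v ⟶ (0 : C)))
    (hcolw : EExactAt E (kernel.ι w) w ∧ EExactAt E w (cokernel.π w) ∧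
      EExactAt E (cokernel.π w) (0 : cokernel w ⟶ (0 : C)))
    (hmidB : EExactAt E f g) (hmidZ : EExactAt E g (0 : Z ⟶ (0 : C)))
    (hbotA' : EExactAt E (0 : (0 : C) ⟶ A') f') (hbotB' : EExactAt E f' g')
    (hg' : E g') :
    ∃ d : kernel w ⟶ cokernel u,
      EExactAt E (kernel.map u v f f' sq1) (kernel.map v w g g' sq2) ∧
      EExactAt E (kernel.map v w g g' sq2) d ∧
      EExactAt E d (cokernel.map u v f f' sq1) ∧
      EExactAt E (cokernel.map u v f f' sq1) (cokernel.map v w g g' sq2) := by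
  classical
  obtain ⟨Wu, eu, mu, hmu0, heu, ⟨hmuL⟩, hufac⟩ := hcolu.2.1
  obtain ⟨Wv, ev, mv, hmv0, hev, ⟨hmvL⟩, hvfac⟩ := hcolv.2.1
  obtain ⟨Ww, ew, mw, hmw0, hew, ⟨hmwL⟩, hwfac⟩ := hcolw.2.1
  obtain ⟨Wf, ef, mf, hmf0, hef, ⟨hmfL⟩, hffac⟩ := hmidB
  obtain ⟨Wb, eb, mb, hmb0, heb, ⟨hmbL⟩, hbfac⟩ := hbotA'
  obtain ⟨Wg, e', k', hk'0, he', ⟨hk'L⟩, hf'fac⟩ := hbotB'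
  have hW := hE.toWeaklyHomological
  have hg : E g := EOfExactZero hW hmidZ
  have hπu : E (cokernel.π u) := EOfExactZero hW hcolu.2.2
  have hπv : E (cokernel.π v) := EOfExactZero hW hcolv.2.2
  have hπw : E (cokernel.π w) := EOfExactZero hW hcolw.2.2
  haveI hmuM : Mono mu := monoOfKernelFork hmuL
  haveI hmvM : Mono mv := monoOfKernelFork hmvL
  haveI hmwM : Mono mw := monoOfKernelFork hmwL
  haveI hmfM : Mono mf := monoOfKernelFork hmfL
  haveI hk'M : Mono k' := monoOfKernelFork hk'L
  have epi_ef : Epi ef := epiOfE hW.normal_epi hef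
  have epi_ev : Epi ev := epiOfE hW.normal_epi hev
  have epi_eu : Epi eu := epiOfE hW.normal_epi heu
  have epi_pu : Epi (cokernel.π u) := epiOfE hW.normal_epi hπu
  -- f' is a mono and a kernel of g'
  have heb0 : eb = 0 := (isZero_zero C).eq_of_src _ _
  have epi_eb : Epi eb := epiOfE hW.normal_epi heb
  have hWbid : (𝟙 Wb) = (0 : Wb ⟶ Wb) := by
    rw [← cancel_epi eb, heb0]; simp
  have hmb0' : mb = 0 := by rw [← Category.id_comp mb, hWbid, zero_comp]
  have hf'g' : f' ≫ g' = 0 := by rw [← hf'fac, Category.assoc, hk'0, comp_zero]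
  obtain ⟨ne'⟩ := hW.normal_epi e' he'
  have hng : ne'.g = 0 := by
    have h1 : ne'.g ≫ f' = 0 := by
      rw [← hf'fac, ← Category.assoc, ne'.w, zero_comp]
    obtain ⟨t, ht'⟩ := kernelForkLift hmbL ne'.g h1
    rw [← ht', hmb0', comp_zero]
  obtain ⟨s', hs'1⟩ := normalEpiDesc ne' (𝟙 A') (by rw [hng, zero_comp])
  have epi_e' : Epi e' := epiOfE hW.normal_epi he'
  have hs'2 : s' ≫ e' = 𝟙 Wg := by
    rw [← cancel_epi e', ← Category.assoc, hs'1, Category.comp_id, Category.id_comp]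
  haveI hIe' : IsIso e' := ⟨s', hs'1, hs'2⟩
  haveI hf'M : Mono f' := by rw [← hf'fac]; exact mono_comp _ _
  have hf'L : IsLimit (KernelFork.ofι f' hf'g') := by
    refine KernelFork.IsLimit.ofι' f' hf'g' (fun {T} t ht => ?_)
    refine ⟨(KernelFork.IsLimit.lift' hk'L t ht).1 ≫ inv e', ?_⟩
    have hl' : (KernelFork.IsLimit.lift' hk'L t ht).1 ≫ k' = t := by
      simpa using (KernelFork.IsLimit.lift' hk'L t ht).2
    rw [← hf'fac, Category.assoc, IsIso.inv_hom_id_assoc, hl']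
  -- commutation squares for the induced maps
  have sqK1 : kernel.map u v f f' sq1 ≫ kernel.ι v = kernel.ι u ≫ f := kernel.lift_ι _ _ _
  have sqK2 : kernel.map v w g g' sq2 ≫ kernel.ι w = kernel.ι v ≫ g := kernel.lift_ι _ _ _
  have sqQ1 : cokernel.π u ≫ cokernel.map u v f f' sq1 = f' ≫ cokernel.π v :=
    cokernel.π_desc _ _ _
  have sqQ2 : cokernel.π v ≫ cokernel.map v w g g' sq2 = g' ≫ cokernel.π w :=
    cokernel.π_desc _ _ _
  have hfg : f ≫ g = 0 := by rw [← hffac, Category.assoc, hmf0, comp_zero]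
  set fK := kernel.map u v f f' sq1 with hfKdef
  set gK := kernel.map v w g g' sq2 with hgKdef
  set fQ := cokernel.map u v f f' sq1 with hfQdef
  set gQ := cokernel.map v w g g' sq2 with hgQdef
  have sqK1r := reassoc_of% sqK1
  have sqK2r := reassoc_of% sqK2
  have sqQ1r := reassoc_of% sqQ1
  have sqQ2r := reassoc_of% sqQ2
  have hffacr := reassoc_of% hffac
  have hvfacr := reassoc_of% hvfac
  have hwfacr := reassoc_of% hwfac
  have hufacr := reassoc_of% hufac
  have hf'facr := reassoc_of% hf'fac
  have sq1r := reassoc_of% sq1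
  have sq2r := reassoc_of% sq2
  -- ==================== Part 1 : exactness at ker v ====================
  have hfKgK : fK ≫ gK = 0 := by
    rw [← cancel_mono (kernel.ι w), zero_comp, Category.assoc, sqK2, sqK1r, hfg, comp_zero]
  have hm1g : (kernel.ι gK ≫ kernel.ι v) ≫ g = 0 := by
    rw [Category.assoc, ← sqK2, ← Category.assoc, kernel.condition, zero_comp]
  obtain ⟨n1, hn1'⟩ := kernelForkLift hmfL (kernel.ι gK ≫ kernel.ι v) hm1g
  have hn1r := reassoc_of% hn1'
  have he1m1 : kernel.lift gK fK hfKgK ≫ kernel.ι gK = fK := kernel.lift_ι _ _ _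
  have he1m1r := reassoc_of% he1m1
  have hcomm1 : kernel.lift gK fK hfKgK ≫ n1 = kernel.ι u ≫ ef := by
    rw [← cancel_mono mf, Category.assoc, hn1', he1m1r, sqK1, Category.assoc, hffac]
  have key1 : ∀ s : PullbackCone n1 ef, s.snd ≫ f = s.fst ≫ kernel.ι gK ≫ kernel.ι v := by
    intro s
    rw [← hffac, ← hn1', ← Category.assoc, ← s.condition, Category.assoc]
  have key1u : ∀ s : PullbackCone n1 ef, s.snd ≫ u = 0 := by
    intro s
    rw [← cancel_mono f', zero_comp, Category.assoc, sq1, ← Category.assoc, key1 s]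
    simp only [Category.assoc]
    rw [kernel.condition, comp_zero, comp_zero]
  have hlim1 : IsLimit (PullbackCone.mk (kernel.lift gK fK hfKgK) (kernel.ι u) hcomm1) := by
    refine PullbackCone.IsLimit.mk hcomm1 (fun s => kernel.lift u s.snd (key1u s))
      (fun s => ?_) (fun s => kernel.lift_ι _ _ _) (fun s t h1 h2 => ?_)
    · rw [← cancel_mono (kernel.ι gK), ← cancel_mono (kernel.ι v)]
      simp only [Category.assoc]
      rw [he1m1r, sqK1, ← Category.assoc, kernel.lift_ι, key1 s]
    · rw [← cancel_mono (kernel.ι u), h2, kernel.lift_ι]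
  have he1E : E (kernel.lift gK fK hfKgK) :=
    hW.stable _ (kernel.ι u) n1 ef (IsPullback.of_isLimit hlim1) hef
  have concl1 : EExactAt E fK gK :=
    ⟨kernel gK, kernel.lift gK fK hfKgK, kernel.ι gK, kernel.condition gK, he1E,
      ⟨kernelIsKernel gK⟩, kernel.lift_ι _ _ _⟩
  -- ==================== the connecting morphism d ====================
  have hp1E : E (pullback.fst (kernel.ι w) g) :=
    hW.stable _ _ _ _ (IsPullback.of_hasPullback (kernel.ι w) g) hg
  have epi_p1 : Epi (pullback.fst (kernel.ι w) g) := epiOfE hW.normal_epi hp1E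
  have hψ0 : (pullback.snd (kernel.ι w) g ≫ v) ≫ g' = 0 := by
    rw [Category.assoc, sq2, ← Category.assoc, ← pullback.condition, Category.assoc,
      kernel.condition, comp_zero]
  obtain ⟨ψ, hψ⟩ := kernelForkLift hf'L (pullback.snd (kernel.ι w) g ≫ v) hψ0
  obtain ⟨j₀, hj₀1, hj₀2, ⟨hj₀L⟩⟩ :=
    pulledBackKernel (IsPullback.of_hasPullback (kernel.ι w) g) hmfL
  have hj₀2r := reassoc_of% hj₀2
  have hefρ : ef ≫ j₀ ≫ ψ = u := by
    rw [← cancel_mono f', sq1]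
    simp only [Category.assoc]
    rw [hψ, hj₀2r, hffacr]
  have hefρr := reassoc_of% hefρ
  have hρπu : j₀ ≫ ψ ≫ cokernel.π u = 0 := by
    rw [← cancel_epi ef, comp_zero, hefρr, cokernel.condition]
  obtain ⟨τ, hτ⟩ := kernelForkLift hmuL (j₀ ≫ ψ) (by rw [Category.assoc, hρπu])
  have hefτ : ef ≫ τ = eu := by
    rw [← cancel_mono mu, Category.assoc, hτ, hefρ, hufac]
  have hτE : E τ := hW.right_cancel ef τ hef (by rw [hefτ]; exact heu)
  obtain ⟨nP⟩ := hW.normal_epi _ hp1E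
  obtain ⟨t₀, ht₀⟩ := kernelForkLift hj₀L nP.g nP.w
  have hnPδ : nP.g ≫ ψ ≫ cokernel.π u = 0 := by
    rw [← ht₀, Category.assoc, hρπu, comp_zero]
  obtain ⟨d, hd⟩ := normalEpiDesc nP (ψ ≫ cokernel.π u) hnPδ
  have hdr := reassoc_of% hd
  -- ==================== Part 2 : exactness at ker w ====================
  have hj0 : gK ≫ kernel.ι w = kernel.ι v ≫ g := sqK2
  have hj1 : pullback.lift gK (kernel.ι v) hj0 ≫ pullback.fst (kernel.ι w) g = gK :=
    pullback.lift_fst _ _ _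
  have hj2 : pullback.lift gK (kernel.ι v) hj0 ≫ pullback.snd (kernel.ι w) g = kernel.ι v :=
    pullback.lift_snd _ _ _
  have hjψ : pullback.lift gK (kernel.ι v) hj0 ≫ ψ = 0 := by
    rw [← cancel_mono f', zero_comp, Category.assoc, hψ, ← Category.assoc, hj2,
      kernel.condition]
  have hgKd : gK ≫ d = 0 := by
    rw [← hj1, Category.assoc, hd, ← Category.assoc, hjψ, zero_comp]
  have hpr1E : E (pullback.fst d (cokernel.π u)) :=
    hW.stable _ _ _ _ (IsPullback.of_hasPullback d (cokernel.π u)) hπu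
  obtain ⟨ν, hν1, hν2, ⟨hνL⟩⟩ :=
    pulledBackKernel (IsPullback.of_hasPullback d (cokernel.π u)) hmuL
  have hΦ1 : pullback.lift (pullback.fst (kernel.ι w) g) ψ hd ≫ pullback.fst d (cokernel.π u)
      = pullback.fst (kernel.ι w) g := pullback.lift_fst _ _ _
  have hΦ2 : pullback.lift (pullback.fst (kernel.ι w) g) ψ hd ≫ pullback.snd d (cokernel.π u)
      = ψ := pullback.lift_snd _ _ _
  have hj₀Φ : j₀ ≫ pullback.lift (pullback.fst (kernel.ι w) g) ψ hd = τ ≫ ν := by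
    apply pullback.hom_ext
    · rw [Category.assoc, hΦ1, hj₀1, Category.assoc, hν1, comp_zero]
    · rw [Category.assoc, hΦ2, Category.assoc, hν2, hτ]
  have hΦE : E (pullback.lift (pullback.fst (kernel.ι w) g) ψ hd) :=
    hE.ladder j₀ ν (pullback.fst (kernel.ι w) g) (pullback.fst d (cokernel.π u)) τ _
      hj₀1 hν1 hj₀L hνL hp1E hpr1E hτE hΦ1 hj₀Φ
  have hμ0 : kernel.ι d ≫ d = (0 : kernel d ⟶ A') ≫ cokernel.π u := by
    rw [kernel.condition, zero_comp]
  have hcomm2 : kernel.lift d gK hgKd ≫ pullback.lift (kernel.ι d) 0 hμ0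
      = pullback.lift gK (kernel.ι v) hj0 ≫ pullback.lift (pullback.fst (kernel.ι w) g) ψ hd := by
    apply pullback.hom_ext
    · rw [Category.assoc, Category.assoc, pullback.lift_fst, pullback.lift_fst,
        kernel.lift_ι, hj1]
    · rw [Category.assoc, Category.assoc, pullback.lift_snd, pullback.lift_snd, comp_zero, hjψ]
  have key2a : ∀ s : PullbackCone (pullback.lift (kernel.ι d) 0 hμ0)
      (pullback.lift (pullback.fst (kernel.ι w) g) ψ hd),
      s.snd ≫ pullback.fst (kernel.ι w) g = s.fst ≫ kernel.ι d := by
    intro s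
    have hc := reassoc_of% s.condition
    calc s.snd ≫ pullback.fst (kernel.ι w) g
        = s.snd ≫ pullback.lift (pullback.fst (kernel.ι w) g) ψ hd
            ≫ pullback.fst d (cokernel.π u) := by rw [hΦ1]
      _ = s.fst ≫ pullback.lift (kernel.ι d) 0 hμ0 ≫ pullback.fst d (cokernel.π u) :=
          (hc _).symm
      _ = s.fst ≫ kernel.ι d := by rw [pullback.lift_fst]
  have key2b : ∀ s : PullbackCone (pullback.lift (kernel.ι d) 0 hμ0)
      (pullback.lift (pullback.fst (kernel.ι w) g) ψ hd), s.snd ≫ ψ = 0 := by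
    intro s
    have hc := reassoc_of% s.condition
    calc s.snd ≫ ψ
        = s.snd ≫ pullback.lift (pullback.fst (kernel.ι w) g) ψ hd
            ≫ pullback.snd d (cokernel.π u) := by rw [hΦ2]
      _ = s.fst ≫ pullback.lift (kernel.ι d) 0 hμ0 ≫ pullback.snd d (cokernel.π u) :=
          (hc _).symm
      _ = 0 := by rw [pullback.lift_snd, comp_zero]
  have key2v : ∀ s : PullbackCone (pullback.lift (kernel.ι d) 0 hμ0)
      (pullback.lift (pullback.fst (kernel.ι w) g) ψ hd),
      (s.snd ≫ pullback.snd (kernel.ι w) g) ≫ v = 0 := by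
    intro s
    rw [Category.assoc, ← hψ, ← Category.assoc, key2b s, zero_comp]
  have keyL : ∀ s : PullbackCone (pullback.lift (kernel.ι d) 0 hμ0)
      (pullback.lift (pullback.fst (kernel.ι w) g) ψ hd),
      kernel.lift v (s.snd ≫ pullback.snd (kernel.ι w) g) (key2v s) ≫ gK
        = s.snd ≫ pullback.fst (kernel.ι w) g := by
    intro s
    rw [← cancel_mono (kernel.ι w), Category.assoc, sqK2, ← Category.assoc, kernel.lift_ι,
      Category.assoc, ← pullback.condition, ← Category.assoc, Category.assoc]
  have hlim2 : IsLimit (PullbackCone.mk (kernel.lift d gK hgKd)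
      (pullback.lift gK (kernel.ι v) hj0) hcomm2) := by
    haveI hjmono' : Mono (pullback.lift gK (kernel.ι v) hj0 ≫ pullback.snd (kernel.ι w) g) := by
      rw [hj2]; infer_instance
    haveI hjmono : Mono (pullback.lift gK (kernel.ι v) hj0) :=
      mono_of_mono (pullback.lift gK (kernel.ι v) hj0) (pullback.snd (kernel.ι w) g)
    refine PullbackCone.IsLimit.mk hcomm2
      (fun s => kernel.lift v (s.snd ≫ pullback.snd (kernel.ι w) g) (key2v s))
      (fun s => ?_) (fun s => ?_) (fun s t h1 h2 => ?_)
    · rw [← cancel_mono (kernel.ι d), Category.assoc, kernel.lift_ι, keyL s, key2a s]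
    · apply pullback.hom_ext
      · rw [Category.assoc, hj1, keyL s]
      · rw [Category.assoc, hj2, kernel.lift_ι]
    · rw [← cancel_mono (pullback.lift gK (kernel.ι v) hj0)]
      rw [h2]
      apply pullback.hom_ext
      · rw [Category.assoc, hj1, keyL s]
      · rw [Category.assoc, hj2, kernel.lift_ι]
  have he2E : E (kernel.lift d gK hgKd) :=
    hW.stable _ _ _ _ (IsPullback.of_isLimit hlim2) hΦE
  have concl2 : EExactAt E gK d :=
    ⟨kernel d, kernel.lift d gK hgKd, kernel.ι d, kernel.condition d, he2E,
      ⟨kernelIsKernel d⟩, kernel.lift_ι _ _ _⟩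
  -- ==================== Part 3 : exactness at cokernel u ====================
  have hψr := reassoc_of% hψ
  have hdfQ : d ≫ fQ = 0 := by
    rw [← cancel_epi (pullback.fst (kernel.ι w) g), comp_zero, hdr, sqQ1, hψr,
      cokernel.condition, comp_zero]
  have hζ₃0 : (pullback.snd (kernel.ι fQ) (cokernel.π u) ≫ f') ≫ cokernel.π v = 0 := by
    rw [Category.assoc, ← sqQ1, ← Category.assoc, ← pullback.condition, Category.assoc,
      kernel.condition, comp_zero]
  obtain ⟨ζ₃, hζ₃⟩ := kernelForkLift hmvL _ hζ₃0
  have hπ₃E : E (pullback.fst (kernel.ι fQ) (cokernel.π u)) :=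
    hW.stable _ _ _ _ (IsPullback.of_hasPullback (kernel.ι fQ) (cokernel.π u)) hπu
  have hχ0 : (pullback.fst (kernel.ι w) g ≫ kernel.lift fQ d hdfQ) ≫ kernel.ι fQ
      = ψ ≫ cokernel.π u := by
    rw [Category.assoc, kernel.lift_ι, hd]
  have hχP1r := reassoc_of%
    (pullback.lift_fst (pullback.fst (kernel.ι w) g ≫ kernel.lift fQ d hdfQ) ψ hχ0)
  have hcomm3 : pullback.lift (pullback.fst (kernel.ι w) g ≫ kernel.lift fQ d hdfQ) ψ hχ0 ≫ ζ₃
      = pullback.snd (kernel.ι w) g ≫ ev := by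
    rw [← cancel_mono mv, Category.assoc, hζ₃, ← Category.assoc, pullback.lift_snd, hψ,
      Category.assoc, hvfac]
  have key3sv : ∀ s : PullbackCone ζ₃ ev, s.snd ≫ v
      = s.fst ≫ pullback.snd (kernel.ι fQ) (cokernel.π u) ≫ f' := by
    intro s
    calc s.snd ≫ v = (s.snd ≫ ev) ≫ mv := by rw [Category.assoc, hvfac]
      _ = (s.fst ≫ ζ₃) ≫ mv := by rw [s.condition]
      _ = s.fst ≫ pullback.snd (kernel.ι fQ) (cokernel.π u) ≫ f' := by
          rw [Category.assoc, hζ₃]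
  have key3w : ∀ s : PullbackCone ζ₃ ev, (s.snd ≫ g) ≫ w = 0 := by
    intro s
    rw [Category.assoc, ← sq2, ← Category.assoc, key3sv s]
    simp only [Category.assoc]
    rw [hf'g', comp_zero, comp_zero]
  have key3ψ : ∀ s : PullbackCone ζ₃ ev,
      pullback.lift (kernel.lift w (s.snd ≫ g) (key3w s)) s.snd (kernel.lift_ι _ _ _) ≫ ψ
        = s.fst ≫ pullback.snd (kernel.ι fQ) (cokernel.π u) := by
    intro s
    rw [← cancel_mono f', Category.assoc, hψ, ← Category.assoc, pullback.lift_snd,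
      key3sv s, ← Category.assoc]
  have hlim3 : IsLimit (PullbackCone.mk
      (pullback.lift (pullback.fst (kernel.ι w) g ≫ kernel.lift fQ d hdfQ) ψ hχ0)
      (pullback.snd (kernel.ι w) g) hcomm3) := by
    refine PullbackCone.IsLimit.mk hcomm3
      (fun s => pullback.lift (kernel.lift w (s.snd ≫ g) (key3w s)) s.snd (kernel.lift_ι _ _ _))
      (fun s => ?_) (fun s => pullback.lift_snd _ _ _) (fun s t h1 h2 => ?_)
    · apply pullback.hom_ext
      · rw [← cancel_mono (kernel.ι fQ)]
        simp only [Category.assoc]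
        rw [hχP1r, kernel.lift_ι, hd, ← Category.assoc, key3ψ s, Category.assoc,
          ← pullback.condition]
      · rw [Category.assoc, pullback.lift_snd, key3ψ s]
    · apply pullback.hom_ext
      · rw [← cancel_mono (kernel.ι w)]
        simp only [Category.assoc]
        rw [pullback.condition, ← Category.assoc, ← Category.assoc, h2, pullback.lift_snd]
      · rw [h2, pullback.lift_snd]
  have hχPE : E (pullback.lift (pullback.fst (kernel.ι w) g ≫ kernel.lift fQ d hdfQ) ψ hχ0) :=
    hW.stable _ _ _ _ (IsPullback.of_isLimit hlim3) hev
  have he3E : E (kernel.lift fQ d hdfQ) := by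
    refine hW.right_cancel (pullback.fst (kernel.ι w) g) (kernel.lift fQ d hdfQ) hp1E ?_
    rw [show pullback.fst (kernel.ι w) g ≫ kernel.lift fQ d hdfQ
        = pullback.lift (pullback.fst (kernel.ι w) g ≫ kernel.lift fQ d hdfQ) ψ hχ0
          ≫ pullback.fst (kernel.ι fQ) (cokernel.π u) from (pullback.lift_fst _ _ _).symm]
    exact hW.comp_closed _ _ hχPE hπ₃E
  have concl3 : EExactAt E d fQ :=
    ⟨kernel fQ, kernel.lift fQ d hdfQ, kernel.ι fQ, kernel.condition fQ, he3E,
      ⟨kernelIsKernel fQ⟩, kernel.lift_ι _ _ _⟩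
  -- ==================== Part 4 : exactness at cokernel v ====================
  have hζ₄0 : (pullback.snd (kernel.ι gQ) (cokernel.π v) ≫ g') ≫ cokernel.π w = 0 := by
    rw [Category.assoc, ← sqQ2, ← Category.assoc, ← pullback.condition, Category.assoc,
      kernel.condition, comp_zero]
  obtain ⟨ζ₄, hζ₄⟩ := kernelForkLift hmwL _ hζ₄0
  have hπ₄E : E (pullback.fst (kernel.ι gQ) (cokernel.π v)) :=
    hW.stable _ _ _ _ (IsPullback.of_hasPullback (kernel.ι gQ) (cokernel.π v)) hπv
  obtain ⟨ιv4, hιv4a, hιv4b, ⟨hιv4L⟩⟩ :=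
    pulledBackKernel (IsPullback.of_hasPullback (kernel.ι gQ) (cokernel.π v)) hmvL
  have hσ0 : (mv ≫ g') ≫ cokernel.π w = 0 := by
    rw [← cancel_epi ev, comp_zero]
    simp only [Category.assoc]
    rw [hvfacr, sq2r, cokernel.condition, comp_zero]
  obtain ⟨σ, hσ⟩ := kernelForkLift hmwL (mv ≫ g') hσ0
  have hevσ : ev ≫ σ = g ≫ ew := by
    rw [← cancel_mono mw, Category.assoc, hσ, ← Category.assoc, hvfac, sq2,
      Category.assoc, hwfac]
  have hσE : E σ := hW.right_cancel ev σ hev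
    (by rw [hevσ]; exact hW.comp_closed _ _ hg hew)
  have hW0E : E (0 : Ww ⟶ (0 : C)) := EZeroOfKernel hW hmwL hπw
  have hq1E : E (pullback.fst (0 : kernel gQ ⟶ (0 : C)) (0 : Ww ⟶ (0 : C))) :=
    hW.stable _ _ _ _
      (IsPullback.of_hasPullback (0 : kernel gQ ⟶ (0 : C)) (0 : Ww ⟶ (0 : C))) hW0E
  have hidL : IsLimit (KernelFork.ofι (𝟙 Ww)
      (show 𝟙 Ww ≫ (0 : Ww ⟶ (0 : C)) = 0 by simp)) :=
    KernelFork.IsLimit.ofι' _ _ (fun {T} k _ => ⟨k, Category.comp_id k⟩)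
  obtain ⟨jh, hjh1, hjh2, ⟨hjhL⟩⟩ :=
    pulledBackKernel
      (IsPullback.of_hasPullback (0 : kernel gQ ⟶ (0 : C)) (0 : Ww ⟶ (0 : C))) hidL
  have hΦ₄0 : pullback.fst (kernel.ι gQ) (cokernel.π v) ≫ (0 : kernel gQ ⟶ (0 : C))
      = ζ₄ ≫ (0 : Ww ⟶ (0 : C)) := by simp
  have hιΦ : ιv4 ≫ pullback.lift (pullback.fst (kernel.ι gQ) (cokernel.π v)) ζ₄ hΦ₄0
      = σ ≫ jh := by
    apply pullback.hom_ext
    · rw [Category.assoc, pullback.lift_fst, hιv4a, Category.assoc, hjh1, comp_zero]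
    · rw [Category.assoc, pullback.lift_snd, Category.assoc, hjh2, Category.comp_id]
      rw [← cancel_mono mw, Category.assoc, hζ₄, ← Category.assoc, hιv4b, hσ]
  have hΦ₄E : E (pullback.lift (pullback.fst (kernel.ι gQ) (cokernel.π v)) ζ₄ hΦ₄0) :=
    hE.ladder ιv4 jh (pullback.fst (kernel.ι gQ) (cokernel.π v))
      (pullback.fst (0 : kernel gQ ⟶ (0 : C)) (0 : Ww ⟶ (0 : C))) σ _
      hιv4a hjh1 hιv4L hjhL hπ₄E hq1E hσE (pullback.lift_fst _ _ _) hιΦ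
  have hκ0 : (f' ≫ cokernel.π v) ≫ gQ = 0 := by
    rw [Category.assoc, sqQ2, ← Category.assoc, hf'g', zero_comp]
  have hjt0 : kernel.lift gQ (f' ≫ cokernel.π v) hκ0 ≫ kernel.ι gQ = f' ≫ cokernel.π v :=
    kernel.lift_ι _ _ _
  have hμ₄0 : 𝟙 (kernel gQ) ≫ (0 : kernel gQ ⟶ (0 : C))
      = (0 : kernel gQ ⟶ Ww) ≫ (0 : Ww ⟶ (0 : C)) := by simp
  have hcomm4 : kernel.lift gQ (f' ≫ cokernel.π v) hκ0
        ≫ pullback.lift (𝟙 (kernel gQ)) (0 : kernel gQ ⟶ Ww) hμ₄0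
      = pullback.lift (kernel.lift gQ (f' ≫ cokernel.π v) hκ0) f' hjt0
        ≫ pullback.lift (pullback.fst (kernel.ι gQ) (cokernel.π v)) ζ₄ hΦ₄0 := by
    apply pullback.hom_ext
    · rw [Category.assoc, pullback.lift_fst, Category.comp_id, Category.assoc,
        pullback.lift_fst, pullback.lift_fst]
    · rw [Category.assoc, pullback.lift_snd, comp_zero, Category.assoc, pullback.lift_snd]
      rw [← cancel_mono mw, zero_comp, Category.assoc, hζ₄, ← Category.assoc,
        pullback.lift_snd, hf'g']
  have key4a : ∀ s : PullbackCone (pullback.lift (𝟙 (kernel gQ)) (0 : kernel gQ ⟶ Ww) hμ₄0)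
      (pullback.lift (pullback.fst (kernel.ι gQ) (cokernel.π v)) ζ₄ hΦ₄0),
      s.snd ≫ pullback.fst (kernel.ι gQ) (cokernel.π v) = s.fst := by
    intro s
    have hc := reassoc_of% s.condition
    calc s.snd ≫ pullback.fst (kernel.ι gQ) (cokernel.π v)
        = s.snd ≫ pullback.lift (pullback.fst (kernel.ι gQ) (cokernel.π v)) ζ₄ hΦ₄0
            ≫ pullback.fst (0 : kernel gQ ⟶ (0 : C)) (0 : Ww ⟶ (0 : C)) := by
          rw [pullback.lift_fst]
      _ = s.fst ≫ pullback.lift (𝟙 (kernel gQ)) (0 : kernel gQ ⟶ Ww) hμ₄0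
            ≫ pullback.fst (0 : kernel gQ ⟶ (0 : C)) (0 : Ww ⟶ (0 : C)) := (hc _).symm
      _ = s.fst := by rw [pullback.lift_fst, Category.comp_id]
  have key4b : ∀ s : PullbackCone (pullback.lift (𝟙 (kernel gQ)) (0 : kernel gQ ⟶ Ww) hμ₄0)
      (pullback.lift (pullback.fst (kernel.ι gQ) (cokernel.π v)) ζ₄ hΦ₄0),
      s.snd ≫ ζ₄ = 0 := by
    intro s
    have hc := reassoc_of% s.condition
    calc s.snd ≫ ζ₄
        = s.snd ≫ pullback.lift (pullback.fst (kernel.ι gQ) (cokernel.π v)) ζ₄ hΦ₄0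
            ≫ pullback.snd (0 : kernel gQ ⟶ (0 : C)) (0 : Ww ⟶ (0 : C)) := by
          rw [pullback.lift_snd]
      _ = s.fst ≫ pullback.lift (𝟙 (kernel gQ)) (0 : kernel gQ ⟶ Ww) hμ₄0
            ≫ pullback.snd (0 : kernel gQ ⟶ (0 : C)) (0 : Ww ⟶ (0 : C)) := (hc _).symm
      _ = 0 := by rw [pullback.lift_snd, comp_zero]
  have key4g : ∀ s : PullbackCone (pullback.lift (𝟙 (kernel gQ)) (0 : kernel gQ ⟶ Ww) hμ₄0)
      (pullback.lift (pullback.fst (kernel.ι gQ) (cokernel.π v)) ζ₄ hΦ₄0),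
      (s.snd ≫ pullback.snd (kernel.ι gQ) (cokernel.π v)) ≫ g' = 0 := by
    intro s
    rw [Category.assoc, ← hζ₄, ← Category.assoc, key4b s, zero_comp]
  have key4t : ∀ s : PullbackCone (pullback.lift (𝟙 (kernel gQ)) (0 : kernel gQ ⟶ Ww) hμ₄0)
      (pullback.lift (pullback.fst (kernel.ι gQ) (cokernel.π v)) ζ₄ hΦ₄0),
      (KernelFork.IsLimit.lift' hf'L
          (s.snd ≫ pullback.snd (kernel.ι gQ) (cokernel.π v)) (key4g s)).1 ≫ f'
        = s.snd ≫ pullback.snd (kernel.ι gQ) (cokernel.π v) := by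
    intro s
    simpa using (KernelFork.IsLimit.lift' hf'L
      (s.snd ≫ pullback.snd (kernel.ι gQ) (cokernel.π v)) (key4g s)).2
  have key4κ : ∀ s : PullbackCone (pullback.lift (𝟙 (kernel gQ)) (0 : kernel gQ ⟶ Ww) hμ₄0)
      (pullback.lift (pullback.fst (kernel.ι gQ) (cokernel.π v)) ζ₄ hΦ₄0),
      (KernelFork.IsLimit.lift' hf'L
          (s.snd ≫ pullback.snd (kernel.ι gQ) (cokernel.π v)) (key4g s)).1
        ≫ kernel.lift gQ (f' ≫ cokernel.π v) hκ0 = s.fst := by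
    intro s
    rw [← cancel_mono (kernel.ι gQ), Category.assoc, kernel.lift_ι, ← Category.assoc,
      key4t s, Category.assoc, ← pullback.condition, ← Category.assoc, key4a s]
  have hlim4 : IsLimit (PullbackCone.mk (kernel.lift gQ (f' ≫ cokernel.π v) hκ0)
      (pullback.lift (kernel.lift gQ (f' ≫ cokernel.π v) hκ0) f' hjt0) hcomm4) := by
    refine PullbackCone.IsLimit.mk hcomm4
      (fun s => (KernelFork.IsLimit.lift' hf'L
        (s.snd ≫ pullback.snd (kernel.ι gQ) (cokernel.π v)) (key4g s)).1)
      (fun s => key4κ s) (fun s => ?_) (fun s t h1 h2 => ?_)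
    · apply pullback.hom_ext
      · rw [Category.assoc, pullback.lift_fst, key4κ s, key4a s]
      · rw [Category.assoc, pullback.lift_snd, key4t s]
    · rw [← cancel_mono f', key4t s, ← h2, Category.assoc, pullback.lift_snd]
  have hκE : E (kernel.lift gQ (f' ≫ cokernel.π v) hκ0) :=
    hW.stable _ _ _ _ (IsPullback.of_isLimit hlim4) hΦ₄E
  have hu4 : u ≫ kernel.lift gQ (f' ≫ cokernel.π v) hκ0 = 0 := by
    rw [← cancel_mono (kernel.ι gQ), zero_comp, Category.assoc, kernel.lift_ι,
      ← Category.assoc, sq1, Category.assoc, cokernel.condition, comp_zero]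
  have hπe4 : cokernel.π u ≫ cokernel.desc u (kernel.lift gQ (f' ≫ cokernel.π v) hκ0) hu4
      = kernel.lift gQ (f' ≫ cokernel.π v) hκ0 := cokernel.π_desc _ _ _
  have he4E : E (cokernel.desc u (kernel.lift gQ (f' ≫ cokernel.π v) hκ0) hu4) :=
    hW.right_cancel (cokernel.π u) _ hπu (by rw [hπe4]; exact hκE)
  have he4m4 : cokernel.desc u (kernel.lift gQ (f' ≫ cokernel.π v) hκ0) hu4 ≫ kernel.ι gQ
      = fQ := by
    rw [← cancel_epi (cokernel.π u), ← Category.assoc, hπe4, kernel.lift_ι, sqQ1]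
  have concl4 : EExactAt E fQ gQ :=
    ⟨kernel gQ, cokernel.desc u (kernel.lift gQ (f' ≫ cokernel.π v) hκ0) hu4, kernel.ι gQ,
      kernel.condition gQ, he4E, ⟨kernelIsKernel gQ⟩, he4m4⟩
  exact ⟨d, concl1, concl2, concl3, concl4⟩

end RelHom
end

section
/- Let C be a pointed category with finite limits and cokernels, E pullback stable, and suppose the E-short five lemma holds. If f : A → B is in E with kernel pair (R, r₁, r₂) and q = coker(ker(f)) is in E with kernel pair (S, s₁, s₂), then the canonical comparison morphism h̄ : S → R induced by the comparison h : Coker(ker f) → B is an isomorphism; consequently, if f and q are regular epimorphisms, h is an isomorphism and f is a normal epimorphism. -/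
open CategoryTheory CategoryTheory.Limits ZeroObject

universe v u v' u'

namespace RelHom

variable {C : Type u} [Category.{v} C]

variable [HasZeroMorphisms C]

noncomputable def isLimitKernelForkPullbackFst {K A B : C} {g : A ⟶ B} [HasPullback g g]
    {k : K ⟶ A} {hk : k ≫ g = 0} (hlim : IsLimit (KernelFork.ofι k hk)) :
    IsLimit (KernelFork.ofι (pullback.lift 0 k (by simp [hk]) : K ⟶ pullback g g)
      (pullback.lift_fst _ _ _)) := by
  have : Mono k := mono_of_isLimit_fork hlim
  have : Mono (pullback.lift 0 k (by simp [hk]) : K ⟶ pullback g g) :=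
    mono_of_mono_fac (pullback.lift_snd _ _ _)
  refine KernelFork.IsLimit.ofι' _ _ (fun {T} t ht => ?_)
  have hcond : (t ≫ pullback.snd g g) ≫ g = 0 := by
    rw [Category.assoc, ← pullback.condition, ← Category.assoc, ht, zero_comp]
  obtain ⟨l, hl⟩ := KernelFork.IsLimit.lift' hlim _ hcond
  refine ⟨l, pullback.hom_ext ?_ ?_⟩
  · rw [Category.assoc, pullback.lift_fst, comp_zero, ht]
  · rw [Category.assoc, pullback.lift_snd]
    exact hl

/-- `k` is also a kernel of `q`, so the first projections of both kernel pairs have kernel `(0, k)`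
and the short five lemma applies to the comparison of kernel pairs. -/
theorem isIso_pullbackMap_of_shortFive {E : MorphismProperty C} (hstb : PullbackStable E)
    (h5 : ShortFive E) {K A Q B : C} {k : K ⟶ A} {f : A ⟶ B} {q : A ⟶ Q} {h : Q ⟶ B}
    [HasPullback q q] [HasPullback f f] (hk : k ≫ f = 0) (hlim : IsLimit (KernelFork.ofι k hk))
    (hkq : k ≫ q = 0) (hqh : q ≫ h = f) (hf : E f) (hq : E q) :
    IsIso (pullback.map q q f f (𝟙 A) (𝟙 A) h (by simp [hqh]) (by simp [hqh])) := by
  have hlimq : IsLimit (KernelFork.ofι k hkq) := isKernelOfComp h f hlim hkq hqh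
  refine h5 _ _ _ _ _ _ _ (isLimitKernelForkPullbackFst hlimq) (isLimitKernelForkPullbackFst hlim)
    (hstb _ _ _ _ (IsPullback.of_hasPullback q q) hq)
    (hstb _ _ _ _ (IsPullback.of_hasPullback f f) hf) (by simp [pullback.lift_fst]) ?_
  apply pullback.hom_ext
  · simp [pullback.lift_fst]
  · simp [pullback.lift_snd]

omit [HasZeroMorphisms C] in
/-- `q` coequalizes the kernel pair of `f` because the latter is an epimorphic image of
the kernel pair of `q`; then `h` is inverse to the map `B ⟶ Q` induced by `q`. -/
theorem isIso_of_regularEpi_of_epi_pullbackMap {A Q B : C} {f : A ⟶ B} {q : A ⟶ Q} {h : Q ⟶ B}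
    [Epi q] [HasPullback q q] [HasPullback f f] (hf : RegularEpi f) (hqh : q ≫ h = f)
    [Epi (pullback.map q q f f (𝟙 A) (𝟙 A) h (by simp [hqh]) (by simp [hqh]))] : IsIso h := by
  have hq : pullback.fst f f ≫ q = pullback.snd f f ≫ q := by
    rw [← cancel_epi (pullback.map q q f f (𝟙 A) (𝟙 A) h _ _)]
    simp [pullback.condition, pullback.lift_fst_assoc, pullback.lift_snd_assoc]
  obtain ⟨g, hg : f ≫ g = q⟩ :=
    Cofork.IsColimit.desc' (IsKernelPair.toCoequalizer (IsPullback.of_hasPullback f f) hf) q hq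
  have : Epi f := hf.epi
  refine ⟨g, ?_, ?_⟩
  · rw [← cancel_epi q, reassoc_of% hqh, hg, Category.comp_id]
  · rw [← cancel_epi f, reassoc_of% hg, hqh, Category.comp_id]

theorem nonempty_normalEpi_of_isIso_cokernelDesc {A B : C} (f : A ⟶ B) [HasKernel f]
    [HasCokernel (kernel.ι f)] [IsIso (cokernel.desc (kernel.ι f) f (kernel.condition f))] :
    Nonempty (NormalEpi f) :=
  ⟨NormalEpi.ofArrowIso ⟨kernel f, kernel.ι f, cokernel.condition _, cokernelIsCokernel _⟩
    (Arrow.isoMk (Iso.refl A) (asIso (cokernel.desc (kernel.ι f) f (kernel.condition f))))⟩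

theorem statement17 [HasFiniteLimits C] [HasCokernels C]
    (E : MorphismProperty C) (hstb : PullbackStable E)
    (h5 : ShortFive E) {A B : C} (f : A ⟶ B) (hf : E f)
    (hq : E (cokernel.π (kernel.ι f))) :
    IsIso (pullback.map (cokernel.π (kernel.ι f)) (cokernel.π (kernel.ι f)) f f
      (𝟙 A) (𝟙 A) (cokernel.desc (kernel.ι f) f (kernel.condition f))
      (by simp) (by simp)) ∧
    (Nonempty (RegularEpi f) → Nonempty (RegularEpi (cokernel.π (kernel.ι f))) →
      (IsIso (cokernel.desc (kernel.ι f) f (kernel.condition f)) ∧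
        Nonempty (NormalEpi f))) := by
  have hqh := cokernel.π_desc (kernel.ι f) f (kernel.condition f)
  have hcomp := isIso_pullbackMap_of_shortFive hstb h5 (kernel.condition f) (kernelIsKernel f)
    (cokernel.condition _) hqh hf hq
  refine ⟨hcomp, fun ⟨hreg⟩ _ => ?_⟩
  have hdesc := isIso_of_regularEpi_of_epi_pullbackMap hreg hqh
  exact ⟨hdesc, nonempty_normalEpi_of_isIso_cokernelDesc f⟩

end RelHom
end
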